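/- arXiv:math/0403020 — 3 statements merged into one kernel-verified Lean document; each statement's English description precedes it below -/
import Mathlib

section
/- Let F(z) = z − H(z) with H ∈ ℂ[[z]]^{×n}, o(H) ≥ 1, and let G(z) = z + N(z) with o(N) ≥ 1 be the formal compositional inverse of F. Then, for any m ≥ 1, (JH(z))^m = 0 if and only if (JN(z))^m = 0. In particular, JH(z) is nilpotent if and only if JN(z) is nilpotent. -/
/-
Common setup: `ℂ[[z]]` is `MvPowerSeries (Fin n) ℂ`; `ℂ[[z,t]]` is realized as
`MvPowerSeries (Fin n) (PowerSeries ℂ)` (power series in `z` with coefficients in `ℂ[[t]]`),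
and `ℂ[t][[z]]` as `MvPowerSeries (Fin n) (Polynomial ℂ)`.  Substitution, partial
derivatives, Jacobian matrices, order and compositional inverses are defined below.
-/

noncomputable section

/-- Construct a multivariate power series from its coefficient function. -/
def PSmk {n : ℕ} {R : Type*} (f : (Fin n →₀ ℕ) → R) : MvPowerSeries (Fin n) R := f

/-- The formal partial derivative `∂/∂z i` on `R[[z₁,…,zₙ]]`. -/
def pd {n : ℕ} {R : Type*} [CommSemiring R] (i : Fin n) (f : MvPowerSeries (Fin n) R) :
    MvPowerSeries (Fin n) R :=
  PSmk fun d => (d i + 1 : ℕ) • MvPowerSeries.coeff (R := R) (d + Finsupp.single i 1) f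

/-- Substitution of the family `a` (each member of positive order in `z`) into `f`:
the coefficient of `z^m` in `f(a)` is `∑_d (coeff d f) · (coeff of z^m in ∏ aᵢ^dᵢ)`;
the sum is finite when each `aᵢ` has positive order. -/
def sub {n : ℕ} {R : Type*} [CommRing R] (f : MvPowerSeries (Fin n) R)
    (a : Fin n → MvPowerSeries (Fin n) R) : MvPowerSeries (Fin n) R :=
  PSmk fun m => ∑ᶠ d : Fin n →₀ ℕ,
    (MvPowerSeries.coeff (R := R) d f) * MvPowerSeries.coeff (R := R) m (∏ i, a i ^ d i)

/-- `f` has order (in `z`) at least `k`: all coefficients in total degree `< k` vanish. -/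
def ordGE {n : ℕ} {R : Type*} [CommSemiring R] (k : ℕ) (f : MvPowerSeries (Fin n) R) : Prop :=
  ∀ d : Fin n →₀ ℕ, (d.sum fun _ e => e) < k → MvPowerSeries.coeff (R := R) d f = 0

/-- Each component of the formal map `H` has order (in `z`) at least `k`. -/
def vordGE {n : ℕ} {R : Type*} [CommSemiring R] (k : ℕ)
    (H : Fin n → MvPowerSeries (Fin n) R) : Prop :=
  ∀ i, ordGE k (H i)

/-- The Jacobian matrix `(∂Hᵢ/∂z_j)` (with respect to `z`) of a formal map. -/
def jac {n : ℕ} {R : Type*} [CommSemiring R] (H : Fin n → MvPowerSeries (Fin n) R) :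
    Matrix (Fin n) (Fin n) (MvPowerSeries (Fin n) R) :=
  Matrix.of fun i j => pd j (H i)

/-- `G` is the formal compositional inverse of the formal map `F`. -/
def IsInv {n : ℕ} {R : Type*} [CommRing R] (F G : Fin n → MvPowerSeries (Fin n) R) : Prop :=
  (∀ i, sub (F i) G = MvPowerSeries.X i) ∧ (∀ i, sub (G i) F = MvPowerSeries.X i)

/-- `ℂ[[z,t]]`, realized as power series in `z` with coefficients in `ℂ[[t]]`. -/
abbrev PSZT (n : ℕ) := MvPowerSeries (Fin n) (PowerSeries ℂ)

/-- The element `t` of `ℂ[[z,t]]`. -/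
def tT {n : ℕ} : PSZT n := MvPowerSeries.C (σ := Fin n) (R := PowerSeries ℂ) PowerSeries.X

/-- The inclusion `ℂ[[z]] → ℂ[[z,t]]`. -/
def inclZ {n : ℕ} : MvPowerSeries (Fin n) ℂ →+* PSZT n :=
  MvPowerSeries.map (σ := Fin n) (PowerSeries.C (R := ℂ))

/-- Setting `t = 0`, as a ring homomorphism `ℂ[[z,t]] → ℂ[[z]]`. -/
def evalT0 {n : ℕ} : PSZT n →+* MvPowerSeries (Fin n) ℂ :=
  MvPowerSeries.map (σ := Fin n) (PowerSeries.constantCoeff (R := ℂ))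

/-- The formal partial derivative `∂/∂t` on `ℂ[[z,t]]`. -/
def dt {n : ℕ} (f : PSZT n) : PSZT n :=
  PSmk fun d => PowerSeries.mk fun k =>
    ((k + 1 : ℕ) : ℂ) * PowerSeries.coeff (R := ℂ) (k + 1) (MvPowerSeries.coeff d f)

/-- `ℂ[t][[z]]`: power series in `z` whose coefficients are polynomials in `t`. -/
abbrev PSZP (n : ℕ) := MvPowerSeries (Fin n) (Polynomial ℂ)

/-- The element `t` of `ℂ[t][[z]]`. -/
def tP {n : ℕ} : PSZP n := MvPowerSeries.C (σ := Fin n) (R := Polynomial ℂ) Polynomial.X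

/-- The inclusion `ℂ[[z]] → ℂ[t][[z]]`. -/
def inclZP {n : ℕ} : MvPowerSeries (Fin n) ℂ →+* PSZP n :=
  MvPowerSeries.map (σ := Fin n) Polynomial.C

/-- The inclusion `ℂ[t][[z]] → ℂ[[z,t]]`. -/
def polyToSer {n : ℕ} : PSZP n →+* PSZT n :=
  MvPowerSeries.map (σ := Fin n) Polynomial.coeToPowerSeries.ringHom

/-- The substitution `t ↦ t + s` on `ℂ[t][[z]]`, for `s ∈ ℂ`. -/
def tshift {n : ℕ} (s : ℂ) : PSZP n →+* PSZP n :=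
  MvPowerSeries.map (σ := Fin n)
    ((Polynomial.aeval (R := ℂ) (Polynomial.X + Polynomial.C s)).toRingHom)

namespace Stmt3Aux

open MvPowerSeries Finset

variable {n : ℕ}

abbrev MPS (n : ℕ) := MvPowerSeries (Fin n) ℂ

def wt (d : Fin n →₀ ℕ) : ℕ := d.sum fun _ e => e

lemma coeff_PSmk (f : (Fin n →₀ ℕ) → ℂ) (d : Fin n →₀ ℕ) :
    MvPowerSeries.coeff d (PSmk f) = f d := rfl

lemma wt_eq_sum (d : Fin n →₀ ℕ) : wt d = ∑ i, d i :=
  Finsupp.sum_fintype _ _ (fun _ => rfl)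

lemma wt_add (d e : Fin n →₀ ℕ) : wt (d + e) = wt d + wt e := by
  simp [wt_eq_sum, Finset.sum_add_distrib]

lemma wt_single (j : Fin n) (k : ℕ) : wt (Finsupp.single j k) = k := by
  simp [wt, Finsupp.sum_single_index]

lemma apply_le_wt (d : Fin n →₀ ℕ) (i : Fin n) : d i ≤ wt d := by
  rw [wt_eq_sum]
  exact Finset.single_le_sum (fun i _ => Nat.zero_le _) (Finset.mem_univ i)

lemma wt_eq_zero {d : Fin n →₀ ℕ} (h : wt d = 0) : d = 0 := by
  ext i
  have := apply_le_wt d i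
  simp only [Finsupp.coe_zero, Pi.zero_apply]
  omega

lemma coeff_pd (j : Fin n) (f : MPS n) (d : Fin n →₀ ℕ) :
    MvPowerSeries.coeff d (pd j f) =
      (d j + 1 : ℕ) • MvPowerSeries.coeff (d + Finsupp.single j 1) f := rfl

lemma coeff_sub' (f : MPS n) (a : Fin n → MPS n) (m : Fin n →₀ ℕ) :
    MvPowerSeries.coeff m (sub f a) =
      ∑ᶠ d : Fin n →₀ ℕ, (MvPowerSeries.coeff d f) *
        MvPowerSeries.coeff m (∏ i, a i ^ d i) := rfl

/-! ### order lemmas -/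

lemma ordGE_mono {k k' : ℕ} (h : k' ≤ k) {f : MPS n} (hf : ordGE k f) : ordGE k' f :=
  fun d hd => hf d (lt_of_lt_of_le hd h)

lemma ordGE_mul {k l : ℕ} {f g : MPS n} (hf : ordGE k f) (hg : ordGE l g) :
    ordGE (k + l) (f * g) := by
  intro d hd
  rw [MvPowerSeries.coeff_mul]
  apply Finset.sum_eq_zero
  rintro ⟨p, q⟩ hp
  have hpq : p + q = d := Finset.HasAntidiagonal.mem_antidiagonal.mp hp
  have hw : wt p + wt q = wt d := by rw [← wt_add, hpq]
  change wt d < k + l at hd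
  rcases Nat.lt_or_ge (wt p) k with h1 | h1
  · rw [hf p h1, zero_mul]
  · rw [hg q (show wt q < l by omega), mul_zero]

lemma ordGE_zero (f : MPS n) : ordGE 0 f := fun _ hd => absurd hd (Nat.not_lt_zero _)

lemma ordGE_prod {ι : Type*} (s : Finset ι) (f : ι → MPS n) (k : ι → ℕ)
    (h : ∀ i ∈ s, ordGE (k i) (f i)) :
    ordGE (∑ i ∈ s, k i) (∏ i ∈ s, f i) := by
  classical
  induction s using Finset.induction_on with
  | empty => simpa using ordGE_zero 1
  | insert a s ha ih =>
    rw [Finset.sum_insert ha, Finset.prod_insert ha]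
    exact ordGE_mul (h a (Finset.mem_insert_self a s))
      (ih fun i hi => h i (Finset.mem_insert_of_mem hi))

lemma ordGE_pow {f : MPS n} (hf : ordGE 1 f) (m : ℕ) : ordGE m (f ^ m) := by
  have := ordGE_prod (Finset.range m) (fun _ => f) (fun _ => 1) (fun _ _ => hf)
  simpa using this

lemma ordGE_prod_pow {a : Fin n → MPS n} (ha : vordGE 1 a) (d : Fin n →₀ ℕ) :
    ordGE (wt d) (∏ i, a i ^ d i) := by
  have := ordGE_prod Finset.univ (fun i => a i ^ d i) (fun i => d i)
    (fun i _ => ordGE_pow (ha i) (d i))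
  rwa [← wt_eq_sum] at this

/-! ### the finite index set -/

def DS (K : ℕ) : Finset (Fin n →₀ ℕ) :=
  (Finset.Iic (Finsupp.equivFunOnFinite.symm fun _ => K)).filter fun d => wt d ≤ K

lemma mem_DS {K : ℕ} {d : Fin n →₀ ℕ} : d ∈ DS K ↔ wt d ≤ K := by
  simp only [DS, Finset.mem_filter, Finset.mem_Iic, and_iff_right_iff_imp]
  intro hw
  intro i
  exact le_trans (apply_le_wt d i) hw

lemma coeff_sub_eq_sum {a : Fin n → MPS n} (ha : vordGE 1 a) {m : Fin n →₀ ℕ} {K : ℕ}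
    (hm : wt m ≤ K) (f : MPS n) :
    MvPowerSeries.coeff m (sub f a) =
      ∑ d ∈ DS K, MvPowerSeries.coeff d f *
        MvPowerSeries.coeff m (∏ i, a i ^ d i) := by
  rw [coeff_sub']
  apply finsum_eq_sum_of_support_subset
  intro d hd
  simp only [Function.mem_support, Ne] at hd
  simp only [Finset.coe_filter, Set.mem_setOf_eq, Finset.mem_coe, mem_DS]
  by_contra hK
  exact hd (by rw [ordGE_prod_pow ha d m (show wt m < wt d by omega), mul_zero])

/-! ### additivity and monomials for `sub` -/

lemma sub_zero' (a : Fin n → MPS n) : sub (0 : MPS n) a = 0 := by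
  ext m
  rw [coeff_sub']
  simp

lemma sub_add' {a : Fin n → MPS n} (ha : vordGE 1 a) (f g : MPS n) :
    sub (f + g) a = sub f a + sub g a := by
  ext m
  rw [map_add, coeff_sub_eq_sum ha (le_refl (wt m)), coeff_sub_eq_sum ha (le_refl (wt m)),
    coeff_sub_eq_sum ha (le_refl (wt m)), ← Finset.sum_add_distrib]
  apply Finset.sum_congr rfl
  intro d _
  rw [map_add, add_mul]

def subAdd (a : Fin n → MPS n) (ha : vordGE 1 a) : MPS n →+ MPS n where
  toFun f := sub f a
  map_zero' := sub_zero' a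
  map_add' := sub_add' ha

lemma sub_monomial (a : Fin n → MPS n) (d : Fin n →₀ ℕ) (c : ℂ) :
    sub (MvPowerSeries.monomial d c) a = c • ∏ i, a i ^ d i := by
  ext m
  rw [coeff_sub']
  rw [finsum_eq_single _ d (fun e he => by
    rw [MvPowerSeries.coeff_monomial, if_neg he, zero_mul])]
  rw [MvPowerSeries.coeff_monomial, if_pos rfl, map_smul, smul_eq_mul]

lemma sub_one' (a : Fin n → MPS n) : sub (1 : MPS n) a = 1 := by
  rw [← MvPowerSeries.monomial_zero_one, sub_monomial]
  simp

/-! ### truncation and agreement up to weight -/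

def aeq (K : ℕ) (f g : MPS n) : Prop :=
  ∀ d : Fin n →₀ ℕ, wt d ≤ K → MvPowerSeries.coeff d f = MvPowerSeries.coeff d g

def truncW (K : ℕ) (f : MPS n) : MPS n :=
  ∑ d ∈ DS K, MvPowerSeries.monomial d (MvPowerSeries.coeff d f)

lemma coeff_truncW (K : ℕ) (f : MPS n) (e : Fin n →₀ ℕ) :
    MvPowerSeries.coeff e (truncW K f) =
      if wt e ≤ K then MvPowerSeries.coeff e f else 0 := by
  rw [truncW, map_sum]
  simp only [MvPowerSeries.coeff_monomial]
  rw [Finset.sum_ite_eq (DS K) e (fun d => MvPowerSeries.coeff d f)]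
  simp [mem_DS]

lemma aeq_truncW (K : ℕ) (f : MPS n) : aeq K (truncW K f) f := by
  intro d hd
  rw [coeff_truncW, if_pos hd]

lemma aeq_symm {K : ℕ} {f g : MPS n} (h : aeq K f g) : aeq K g f :=
  fun d hd => (h d hd).symm

lemma aeq_mul {K : ℕ} {f f' g g' : MPS n} (hf : aeq K f f') (hg : aeq K g g') :
    aeq K (f * g) (f' * g') := by
  intro d hd
  rw [MvPowerSeries.coeff_mul, MvPowerSeries.coeff_mul]
  apply Finset.sum_congr rfl
  rintro ⟨p, q⟩ hp
  have hpq : p + q = d := Finset.HasAntidiagonal.mem_antidiagonal.mp hp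
  have hw : wt p + wt q = wt d := by rw [← wt_add, hpq]
  rw [hf p (by omega), hg q (by omega)]

lemma aeq_pd {K : ℕ} {f g : MPS n} (j : Fin n) (h : aeq (K + 1) f g) :
    aeq K (pd j f) (pd j g) := by
  intro d hd
  rw [coeff_pd, coeff_pd, h (d + Finsupp.single j 1) (by rw [wt_add, wt_single]; omega)]

lemma aeq_sub {a : Fin n → MPS n} (ha : vordGE 1 a) {K : ℕ} {f g : MPS n}
    (h : aeq K f g) : aeq K (sub f a) (sub g a) := by
  intro m hm
  rw [coeff_sub_eq_sum ha hm, coeff_sub_eq_sum ha hm]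
  apply Finset.sum_congr rfl
  intro d hd
  rw [h d (mem_DS.mp hd)]

/-! ### `pd` is a derivation -/

lemma pd_add (j : Fin n) (f g : MPS n) : pd j (f + g) = pd j f + pd j g := by
  ext d
  rw [map_add, coeff_pd, coeff_pd, coeff_pd, map_add, smul_add]

lemma pd_smul (j : Fin n) (c : ℂ) (f : MPS n) : pd j (c • f) = c • pd j f := by
  ext d
  rw [coeff_pd, map_smul, map_smul, coeff_pd, smul_comm]

lemma single_le_of_ne_zero {p : Fin n →₀ ℕ} {j : Fin n} (h : p j ≠ 0) :
    Finsupp.single j 1 ≤ p := by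
  rw [Finsupp.single_le_iff]
  omega

lemma sum_antidiagonal_swap' (e : Fin n →₀ ℕ) (F : (Fin n →₀ ℕ) × (Fin n →₀ ℕ) → ℂ) :
    ∑ p ∈ Finset.HasAntidiagonal.antidiagonal e, F p = ∑ p ∈ Finset.HasAntidiagonal.antidiagonal e, F p.swap := by
  conv_lhs => rw [← Finset.HasAntidiagonal.map_swap_antidiagonal]
  rw [Finset.sum_map]
  rfl

lemma pd_mul (j : Fin n) (f g : MPS n) : pd j (f * g) = pd j f * g + f * pd j g := by
  classical
  ext d
  set E : Fin n →₀ ℕ := Finsupp.single j 1 with hE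
  have hEj : E j = 1 := by simp [hE]
  have key : ∀ (u v : MPS n),
      ∑ p ∈ Finset.HasAntidiagonal.antidiagonal (d + E), (p.1 j) •
        (MvPowerSeries.coeff p.1 u * MvPowerSeries.coeff p.2 v)
      = ∑ p ∈ Finset.HasAntidiagonal.antidiagonal d,
          MvPowerSeries.coeff p.1 (pd j u) * MvPowerSeries.coeff p.2 v := by
    intro u v
    rw [← Finset.sum_filter_of_ne (p := fun p : (Fin n →₀ ℕ) × (Fin n →₀ ℕ) => p.1 j ≠ 0)
      (fun x _ hx => by
        intro h0
        exact hx (by rw [h0, zero_smul]))]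
    refine Finset.sum_bij' (fun p _ => (p.1 - E, p.2)) (fun q _ => (q.1 + E, q.2))
      ?_ ?_ ?_ ?_ ?_
    · rintro ⟨p1, p2⟩ hp
      simp only [Finset.mem_filter, Finset.HasAntidiagonal.mem_antidiagonal] at hp
      rw [Finset.HasAntidiagonal.mem_antidiagonal]
      have h1 : E ≤ p1 := single_le_of_ne_zero hp.2
      ext i
      have := congrArg (fun x => x i) hp.1
      simp only [Finsupp.add_apply] at this ⊢
      rw [Finsupp.tsub_apply]
      have h2 : E i ≤ p1 i := h1 i
      omega
    · rintro ⟨q1, q2⟩ hq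
      rw [Finset.HasAntidiagonal.mem_antidiagonal] at hq
      simp only [Finset.mem_filter, Finset.HasAntidiagonal.mem_antidiagonal]
      constructor
      · ext i
        have := congrArg (fun x => x i) hq
        simp only [Finsupp.add_apply] at this ⊢
        omega
      · simp only [Finsupp.add_apply, hEj]
        omega
    · rintro ⟨p1, p2⟩ hp
      simp only [Finset.mem_filter] at hp
      have h1 : E ≤ p1 := single_le_of_ne_zero hp.2
      show (p1 - E + E, p2) = (p1, p2)
      rw [tsub_add_cancel_of_le h1]
    · rintro ⟨q1, q2⟩ _
      have hq : q1 + E - E = q1 := by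
        ext i
        rw [Finsupp.tsub_apply, Finsupp.add_apply]
        omega
      show (q1 + E - E, q2) = (q1, q2)
      rw [hq]
    · rintro ⟨p1, p2⟩ hp
      simp only [Finset.mem_filter] at hp
      have h1 : E ≤ p1 := single_le_of_ne_zero hp.2
      rw [coeff_pd]
      have h2 : (p1 - E) + E = p1 := tsub_add_cancel_of_le h1
      rw [h2]
      have h3 : (p1 - E) j + 1 = p1 j := by
        rw [Finsupp.tsub_apply, hEj]
        have := h1 j
        rw [hEj] at this
        omega
      rw [h3, smul_mul_assoc]
  have key2 :
      ∑ p ∈ Finset.HasAntidiagonal.antidiagonal (d + E), (p.2 j) •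
        (MvPowerSeries.coeff p.1 f * MvPowerSeries.coeff p.2 g)
      = ∑ p ∈ Finset.HasAntidiagonal.antidiagonal d,
          MvPowerSeries.coeff p.1 f * MvPowerSeries.coeff p.2 (pd j g) := by
    rw [sum_antidiagonal_swap' (d + E), sum_antidiagonal_swap' d]
    simp only [Prod.fst_swap, Prod.snd_swap]
    have : ∀ p ∈ Finset.HasAntidiagonal.antidiagonal (d + E),
        (p.1 j) • (MvPowerSeries.coeff p.2 f * MvPowerSeries.coeff p.1 g)
        = (p.1 j) • (MvPowerSeries.coeff p.1 g * MvPowerSeries.coeff p.2 f) := by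
      intro p _
      rw [mul_comm]
    rw [Finset.sum_congr rfl this, key g f]
    apply Finset.sum_congr rfl
    intro p _
    rw [mul_comm]
  rw [map_add, coeff_pd, MvPowerSeries.coeff_mul, MvPowerSeries.coeff_mul,
    MvPowerSeries.coeff_mul, Finset.smul_sum]
  have split : ∀ p ∈ Finset.HasAntidiagonal.antidiagonal (d + E),
      (d j + 1) • (MvPowerSeries.coeff p.1 f * MvPowerSeries.coeff p.2 g)
      = (p.1 j) • (MvPowerSeries.coeff p.1 f * MvPowerSeries.coeff p.2 g)
        + (p.2 j) • (MvPowerSeries.coeff p.1 f * MvPowerSeries.coeff p.2 g) := by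
    rintro ⟨p1, p2⟩ hp
    have hpq : p1 + p2 = d + E := Finset.HasAntidiagonal.mem_antidiagonal.mp hp
    have hj' : p1 j + p2 j = d j + 1 := by
      have := congrArg (fun x => x j) hpq
      simp only [Finsupp.add_apply, hEj] at this
      omega
    rw [← add_nsmul, hj']
  rw [Finset.sum_congr rfl split, Finset.sum_add_distrib, key f g, key2]

def pdLM (j : Fin n) : MPS n →ₗ[ℂ] MPS n where
  toFun := pd j
  map_add' := pd_add j
  map_smul' c f := pd_smul j c f

lemma pd_C (j : Fin n) (c : ℂ) : pd j (MvPowerSeries.C c) = 0 := by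
  ext d
  rw [coeff_pd, MvPowerSeries.coeff_C]
  rw [if_neg (fun h => by
    have := congrArg (fun x => x j) h
    simp [Finsupp.add_apply] at this)]
  simp

def pdD (j : Fin n) : Derivation ℂ (MPS n) (MPS n) :=
  { pdLM j with
    map_one_eq_zero' := by
      have : (1 : MPS n) = MvPowerSeries.C 1 := by simp
      show pd j (1 : MPS n) = 0
      rw [this, pd_C]
    leibniz' := fun f g => by
      show pd j (f * g) = f • pd j g + g • pd j f
      rw [pd_mul, smul_eq_mul, smul_eq_mul, mul_comm (pd j f) g]
      ring }

lemma pdD_apply (j : Fin n) (f : MPS n) : pdD j f = pd j f := rfl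

lemma pd_prod {ι : Type*} [DecidableEq ι] (j : Fin n) (s : Finset ι) (f : ι → MPS n) :
    pd j (∏ i ∈ s, f i) = ∑ k ∈ s, (∏ i ∈ s.erase k, f i) * pd j (f k) := by
  induction s using Finset.induction_on with
  | empty =>
    simp only [Finset.prod_empty, Finset.sum_empty]
    exact (pdD j).map_one_eq_zero
  | insert a s ha ih =>
    rw [Finset.prod_insert ha, pd_mul, ih, Finset.sum_insert ha, Finset.erase_insert ha,
      Finset.mul_sum]
    congr 1
    · rw [mul_comm]
    · apply Finset.sum_congr rfl
      intro k hk
      rw [Finset.erase_insert_of_ne (by rintro rfl; exact ha hk), Finset.prod_insert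
        (fun h => ha (Finset.mem_of_mem_erase h))]
      ring

lemma pd_pow (j : Fin n) (f : MPS n) (m : ℕ) :
    pd j (f ^ m) = m • (f ^ (m - 1) * pd j f) := by
  have := (pdD j).leibniz_pow m (a := f)
  rw [pdD_apply, pdD_apply, smul_eq_mul] at this
  exact this

lemma pd_monomial (k : Fin n) (d : Fin n →₀ ℕ) (c : ℂ) :
    pd k (MvPowerSeries.monomial d c) =
      (d k) • MvPowerSeries.monomial (d - Finsupp.single k 1) c := by
  ext e
  rw [coeff_pd, map_nsmul, MvPowerSeries.coeff_monomial, MvPowerSeries.coeff_monomial]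
  by_cases hdk : d k = 0
  · rw [if_neg (fun h => by
      have := congrArg (fun x => x k) h
      simp [Finsupp.add_apply, hdk] at this)]
    rw [hdk, smul_zero, zero_smul]
  · by_cases he : e = d - Finsupp.single k 1
    · subst he
      have h1 : d - Finsupp.single k 1 + Finsupp.single k 1 = d := by
        ext i
        rw [Finsupp.add_apply, Finsupp.tsub_apply, Finsupp.single_apply]
        split_ifs with h
        · subst h; omega
        · omega
      rw [if_pos h1, if_pos rfl, Finsupp.tsub_apply, Finsupp.single_apply, if_pos rfl]
      congr 1
      omega
    · rw [if_neg he, if_neg (fun h => he (by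
        ext i
        have hcomp := congrArg (fun x => x i) h
        simp only [Finsupp.add_apply] at hcomp
        rw [Finsupp.tsub_apply, Finsupp.single_apply]
        rw [Finsupp.single_apply] at hcomp
        split_ifs with hik
        · rw [if_pos hik] at hcomp
          subst hik
          omega
        · rw [if_neg hik] at hcomp
          omega))]
      rw [smul_zero, smul_zero]

lemma pd_X (j k : Fin n) :
    pd j (MvPowerSeries.X k : MPS n) = if k = j then 1 else 0 := by
  have hX : (MvPowerSeries.X k : MPS n) = MvPowerSeries.monomial (Finsupp.single k 1) 1 := rfl
  rw [hX, pd_monomial, Finsupp.single_apply]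
  rcases eq_or_ne k j with rfl | hkj
  · have hz : Finsupp.single k 1 - Finsupp.single k 1 = (0 : Fin n →₀ ℕ) := by
      ext i
      rw [Finsupp.tsub_apply]
      simp
    rw [if_pos rfl, if_pos rfl, hz, MvPowerSeries.monomial_zero_one, one_smul]
  · rw [if_neg hkj, if_neg hkj, zero_smul]

/-! ### chain rule and multiplicativity -/

lemma prod_pow_add (a : Fin n → MPS n) (d e : Fin n →₀ ℕ) :
    ∏ i, a i ^ (d + e) i = (∏ i, a i ^ d i) * ∏ i, a i ^ e i := by
  rw [← Finset.prod_mul_distrib]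
  apply Finset.prod_congr rfl
  intro i _
  rw [Finsupp.add_apply, pow_add]

lemma sub_monomial_mul (a : Fin n → MPS n) (d e : Fin n →₀ ℕ) (c c' : ℂ) :
    sub (MvPowerSeries.monomial d c * MvPowerSeries.monomial e c') a
      = sub (MvPowerSeries.monomial d c) a * sub (MvPowerSeries.monomial e c') a := by
  rw [MvPowerSeries.monomial_mul_monomial, sub_monomial, sub_monomial, sub_monomial,
    prod_pow_add]
  simp only [MvPowerSeries.smul_eq_C_mul, map_mul]
  ring

lemma sub_apply_eq (a : Fin n → MPS n) (ha : vordGE 1 a) (f : MPS n) :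
    sub f a = subAdd a ha f := rfl

lemma sub_truncW_mul {a : Fin n → MPS n} (ha : vordGE 1 a) (K : ℕ) (f g : MPS n) :
    sub (truncW K f * truncW K g) a = sub (truncW K f) a * sub (truncW K g) a := by
  rw [truncW, truncW, Finset.sum_mul_sum]
  simp only [sub_apply_eq a ha, map_sum]
  rw [Finset.sum_mul_sum]
  apply Finset.sum_congr rfl
  intro d _
  apply Finset.sum_congr rfl
  intro e _
  exact sub_monomial_mul a d e _ _

lemma sub_mul' {a : Fin n → MPS n} (ha : vordGE 1 a) (f g : MPS n) :
    sub (f * g) a = sub f a * sub g a := by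
  ext m
  have htf := aeq_truncW (wt m) f
  have htg := aeq_truncW (wt m) g
  have h1 : aeq (wt m) (f * g) (truncW (wt m) f * truncW (wt m) g) :=
    aeq_mul (aeq_symm htf) (aeq_symm htg)
  rw [aeq_sub ha h1 m (le_refl _), sub_truncW_mul ha,
    aeq_mul (aeq_sub ha (aeq_symm htf)) (aeq_sub ha (aeq_symm htg)) m (le_refl _)]

def subRH (a : Fin n → MPS n) (ha : vordGE 1 a) : MPS n →+* MPS n where
  toFun f := sub f a
  map_one' := sub_one' a
  map_mul' := sub_mul' ha
  map_zero' := sub_zero' a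
  map_add' := sub_add' ha

lemma pd_sub_monomial (a : Fin n → MPS n) (j : Fin n) (d : Fin n →₀ ℕ) (c : ℂ) :
    pd j (sub (MvPowerSeries.monomial d c) a)
      = ∑ k, sub (pd k (MvPowerSeries.monomial d c)) a * pd j (a k) := by
  have hmon : ∀ k : Fin n, pd k (MvPowerSeries.monomial d c)
      = MvPowerSeries.monomial (d - Finsupp.single k 1) ((d k : ℂ) * c) := by
    intro k
    rw [pd_monomial, ← map_nsmul]
    congr 1
    rw [nsmul_eq_mul]
  rw [sub_monomial, pd_smul, pd_prod]
  rw [Finset.smul_sum]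
  apply Finset.sum_congr rfl
  intro k _
  rw [hmon k, sub_monomial, pd_pow]
  by_cases hdk : d k = 0
  · rw [hdk]
    simp
  · have hprod : ∏ i, a i ^ ((d - Finsupp.single k 1 : Fin n →₀ ℕ) i)
        = a k ^ (d k - 1) * ∏ i ∈ Finset.univ.erase k, a i ^ d i := by
      rw [← Finset.mul_prod_erase Finset.univ _ (Finset.mem_univ k)]
      congr 1
      · congr 1
        rw [Finsupp.tsub_apply, Finsupp.single_apply, if_pos rfl]
      · apply Finset.prod_congr rfl
        intro i hi
        congr 1
        rw [Finsupp.tsub_apply, Finsupp.single_apply,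
          if_neg (Ne.symm (Finset.ne_of_mem_erase hi)), Nat.sub_zero]
    rw [hprod]
    simp only [MvPowerSeries.smul_eq_C_mul, nsmul_eq_mul, map_mul, map_natCast]
    ring

lemma pd_sub_truncW {a : Fin n → MPS n} (ha : vordGE 1 a) (j : Fin n) (K : ℕ) (f : MPS n) :
    pd j (sub (truncW K f) a) = ∑ k, sub (pd k (truncW K f)) a * pd j (a k) := by
  have hpD : ∀ (i : Fin n) (g : MPS n), pd i g = pdLM i g := fun _ _ => rfl
  rw [truncW, sub_apply_eq a ha, map_sum, hpD, map_sum]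
  have hR : ∀ k : Fin n, sub (pd k (∑ d ∈ DS K,
      MvPowerSeries.monomial d (MvPowerSeries.coeff d f))) a * pd j (a k)
      = ∑ d ∈ DS K, sub (pd k (MvPowerSeries.monomial d (MvPowerSeries.coeff d f))) a
          * pd j (a k) := by
    intro k
    rw [hpD, map_sum, sub_apply_eq a ha, map_sum, Finset.sum_mul]
    apply Finset.sum_congr rfl
    intro d _
    rfl
  rw [Finset.sum_congr rfl (fun k _ => hR k), Finset.sum_comm]
  apply Finset.sum_congr rfl
  intro d _
  rw [← hpD]
  exact pd_sub_monomial a j d _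

lemma pd_sub {a : Fin n → MPS n} (ha : vordGE 1 a) (f : MPS n) (j : Fin n) :
    pd j (sub f a) = ∑ k, sub (pd k f) a * pd j (a k) := by
  ext m
  have htr := aeq_truncW (wt m + 1) f
  have L := (aeq_pd j (aeq_sub ha htr)) m (le_refl _)
  have R : ∀ k : Fin n, aeq (wt m) (sub (pd k (truncW (wt m + 1) f)) a * pd j (a k))
      (sub (pd k f) a * pd j (a k)) :=
    fun k => aeq_mul (aeq_sub ha (aeq_pd k htr)) (fun _ _ => rfl)
  rw [← L, pd_sub_truncW ha j (wt m + 1) f, map_sum, map_sum]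
  exact Finset.sum_congr rfl fun k _ => R k m (le_refl _)

/-! ### endgame -/

lemma ordGE_X (i : Fin n) : ordGE 1 (MvPowerSeries.X i : MPS n) := by
  intro d hd
  change wt d < 1 at hd
  have h0 : d = 0 := wt_eq_zero (by omega)
  subst h0
  rw [MvPowerSeries.coeff_X, if_neg]
  intro h
  have := congrArg (fun x : Fin n →₀ ℕ => x i) h
  simp [Finsupp.single_apply] at this

lemma neg_pow_eq_zero_iff {S : Type*} [Ring S] (X : S) (m : ℕ) :
    (-X) ^ m = 0 ↔ X ^ m = 0 := by
  constructor
  · intro h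
    have key : X = (-1 : S) * (-X) := by rw [neg_mul_neg, one_mul]
    rw [key, (Commute.neg_one_left (-X)).mul_pow, h, mul_zero]
  · intro h
    rw [neg_pow, h, mul_zero]

lemma unit_conj_pow_zero {S : Type*} [Ring S] (P Q : S)
    (h1 : (1 + P) * (1 + Q) = 1) (h2 : (1 + Q) * (1 + P) = 1) (m : ℕ) :
    P ^ m = 0 ↔ Q ^ m = 0 := by
  have e1 : P + Q + P * Q = 0 := by
    have h : (1 + P) * (1 + Q) = 1 + (P + Q + P * Q) := by noncomm_ring
    rw [h] at h1
    exact add_eq_left.mp h1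
  have e2 : Q + P + Q * P = 0 := by
    have h : (1 + Q) * (1 + P) = 1 + (Q + P + Q * P) := by noncomm_ring
    rw [h] at h2
    exact add_eq_left.mp h2
  have comm : P * Q = Q * P := by
    have hPQ : P * Q = -(P + Q) := eq_neg_of_add_eq_zero_right e1
    have hQP : Q * P = -(Q + P) := eq_neg_of_add_eq_zero_right e2
    rw [hPQ, hQP, add_comm]
  have cPQ : Commute P Q := comm
  have eQ : Q = -P * (1 + Q) := by
    have h' : Q + (P + P * Q) = 0 := by rw [← e1]; abel
    have expand : -P * (1 + Q) = -(P + P * Q) := by noncomm_ring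
    rw [expand]
    exact eq_neg_of_add_eq_zero_left h'
  have eP : P = -Q * (1 + P) := by
    have h' : P + (Q + Q * P) = 0 := by rw [← e2]; abel
    have expand : -Q * (1 + P) = -(Q + Q * P) := by noncomm_ring
    rw [expand]
    exact eq_neg_of_add_eq_zero_left h' 
  constructor
  · intro h
    have c1 : Commute (-P) (1 + Q) := (Commute.one_right (-P)).add_right cPQ.neg_left
    rw [eQ, c1.mul_pow, neg_pow, h, mul_zero, zero_mul]
  · intro h
    have c2 : Commute (-Q) (1 + P) := (Commute.one_right (-Q)).add_right cPQ.symm.neg_left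
    rw [eP, c2.mul_pow, neg_pow, h, mul_zero, zero_mul]

end Stmt3Aux

open Stmt3Aux in
/-- if `G(z) = z + N(z)` is the formal inverse of `F(z) = z - H(z)`,
then for any `m ≥ 1`, `(JH)^m = 0 ↔ (JN)^m = 0`; in particular
`JH` is nilpotent iff `JN` is nilpotent. -/
theorem stmt3 {n : ℕ} (H N : Fin n → MvPowerSeries (Fin n) ℂ)
    (hH : vordGE 1 H) (hN : vordGE 1 N)
    (hinv : IsInv (fun i => MvPowerSeries.X i - H i) (fun i => MvPowerSeries.X i + N i)) :
    (∀ m : ℕ, 1 ≤ m → (jac H ^ m = 0 ↔ jac N ^ m = 0)) ∧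
    (IsNilpotent (jac H) ↔ IsNilpotent (jac N)) := by
  classical
  have hG : vordGE 1 (fun i => MvPowerSeries.X i + N i) := by
    intro i d hd
    show MvPowerSeries.coeff d (MvPowerSeries.X i + N i) = 0
    rw [map_add, ordGE_X i d hd, hN i d hd, add_zero]
  have hF : vordGE 1 (fun i => MvPowerSeries.X i - H i) := by
    intro i d hd
    show MvPowerSeries.coeff d (MvPowerSeries.X i - H i) = 0
    rw [map_sub, ordGE_X i d hd, hH i d hd, sub_zero]
  set φ := subRH _ hG with hφ
  set ψ := subRH _ hF with hψ
  have key1 : (1 - (jac H).map φ) * (1 + jac N) = 1 := by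
    ext i j
    have h1 : sub (MvPowerSeries.X i - H i) (fun i => MvPowerSeries.X i + N i)
        = MvPowerSeries.X i := hinv.1 i
    have hchain := pd_sub hG (MvPowerSeries.X i - H i) j
    rw [h1, pd_X] at hchain
    rw [Matrix.mul_apply, Matrix.one_apply]
    have hterm : ∀ k : Fin n, (1 - (jac H).map φ) i k * (1 + jac N) k j
        = sub (pd k (MvPowerSeries.X i - H i)) (fun i => MvPowerSeries.X i + N i)
          * pd j ((fun i => MvPowerSeries.X i + N i) k) := by
      intro k
      have e1 : pd k (MvPowerSeries.X i - H i)
          = (if i = k then (1 : MPS n) else 0) - pd k (H i) := by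
        have hsub : pd k (MvPowerSeries.X i - H i)
            = pd k (MvPowerSeries.X i) - pd k (H i) := (pdLM k).map_sub _ _
        rw [hsub, pd_X]
      have e2 : sub ((if i = k then (1 : MPS n) else 0) - pd k (H i))
          (fun i => MvPowerSeries.X i + N i)
          = (if i = k then (1 : MPS n) else 0) - φ (pd k (H i)) := by
        have hrh : ∀ g : MPS n, sub g (fun i => MvPowerSeries.X i + N i) = φ g :=
          fun _ => rfl
        rw [hrh, map_sub]
        congr 1
        split_ifs
        · exact map_one φ
        · exact map_zero φ
      have e3 : pd j ((fun i => MvPowerSeries.X i + N i) k)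
          = (if k = j then (1 : MPS n) else 0) + pd j (N k) := by
        show pd j (MvPowerSeries.X k + N k) = _
        rw [pd_add, pd_X]
      rw [e1, e2, e3]
      rw [Matrix.sub_apply, Matrix.add_apply, Matrix.one_apply, Matrix.one_apply,
        Matrix.map_apply]
      rfl
    rw [Finset.sum_congr rfl (fun k _ => hterm k)]
    exact congrArg _ hchain.symm
  have key2 : (1 + (jac N).map ψ) * (1 - jac H) = 1 := by
    ext i j
    have h1 : sub (MvPowerSeries.X i + N i) (fun i => MvPowerSeries.X i - H i)
        = MvPowerSeries.X i := hinv.2 i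
    have hchain := pd_sub hF (MvPowerSeries.X i + N i) j
    rw [h1, pd_X] at hchain
    rw [Matrix.mul_apply, Matrix.one_apply]
    have hterm : ∀ k : Fin n, (1 + (jac N).map ψ) i k * (1 - jac H) k j
        = sub (pd k (MvPowerSeries.X i + N i)) (fun i => MvPowerSeries.X i - H i)
          * pd j ((fun i => MvPowerSeries.X i - H i) k) := by
      intro k
      have e1 : pd k (MvPowerSeries.X i + N i)
          = (if i = k then (1 : MPS n) else 0) + pd k (N i) := by
        rw [pd_add, pd_X]
      have e2 : sub ((if i = k then (1 : MPS n) else 0) + pd k (N i))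
          (fun i => MvPowerSeries.X i - H i)
          = (if i = k then (1 : MPS n) else 0) + ψ (pd k (N i)) := by
        have hrh : ∀ g : MPS n, sub g (fun i => MvPowerSeries.X i - H i) = ψ g :=
          fun _ => rfl
        rw [hrh, map_add]
        congr 1
        split_ifs
        · exact map_one ψ
        · exact map_zero ψ
      have e3 : pd j ((fun i => MvPowerSeries.X i - H i) k)
          = (if k = j then (1 : MPS n) else 0) - pd j (H k) := by
        show pd j (MvPowerSeries.X k - H k) = _
        have hsub : pd j (MvPowerSeries.X k - H k)
            = pd j (MvPowerSeries.X k) - pd j (H k) := (pdLM j).map_sub _ _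
        rw [hsub, pd_X]
      rw [e1, e2, e3]
      rw [Matrix.add_apply, Matrix.sub_apply, Matrix.one_apply, Matrix.one_apply,
        Matrix.map_apply]
      rfl
    rw [Finset.sum_congr rfl (fun k _ => hterm k)]
    exact congrArg _ hchain.symm
  have main : ∀ m : ℕ, jac H ^ m = 0 ↔ jac N ^ m = 0 := by
    intro m
    constructor
    · intro h
      have hA : ((jac H).map φ) ^ m = 0 := by
        have hmm : (jac H).map φ = φ.mapMatrix (jac H) := rfl
        rw [hmm, ← map_pow, h, map_zero]
      have h1' : (1 + -((jac H).map φ)) * (1 + jac N) = 1 := by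
        rw [← sub_eq_add_neg]; exact key1
      have h2' := mul_eq_one_comm.mp h1'
      exact (unit_conj_pow_zero _ _ h1' h2' m).mp ((neg_pow_eq_zero_iff _ m).mpr hA)
    · intro h
      have hB : ((jac N).map ψ) ^ m = 0 := by
        have hmm : (jac N).map ψ = ψ.mapMatrix (jac N) := rfl
        rw [hmm, ← map_pow, h, map_zero]
      have h1' : (1 + (jac N).map ψ) * (1 + -(jac H)) = 1 := by
        rw [← sub_eq_add_neg]; exact key2
      have h2' := mul_eq_one_comm.mp h1'
      exact (neg_pow_eq_zero_iff _ m).mp ((unit_conj_pow_zero _ _ h1' h2' m).mp hB)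
  refine ⟨fun m _ => main m, ⟨?_, ?_⟩⟩
  · rintro ⟨m, hm⟩
    exact ⟨m, (main m).mp hm⟩
  · rintro ⟨m, hm⟩
    exact ⟨m, (main m).mpr hm⟩
end
end

section
/- Let H(z) ∈ ℂ[[z]]^{×n} and N_t(z) ∈ ℂ[[z,t]]^{×n} with o(H) ≥ 1 and order of N_t in z at least 1. Then the following are equivalent: (1) the formal map G_t(z) = z + tN_t(z) is the formal compositional inverse of F_t(z) = z − tH(z); (2) N_t(z) satisfies the Cauchy problem ∂N_t/∂t = JN_t·N_t with initial condition N_{t=0}(z) = H(z), where JN_t is the Jacobian matrix of N_t with respect to z; moreover the power series solution of this Cauchy problem is unique. -/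
/-
Common setup: `ℂ[[z]]` is `MvPowerSeries (Fin n) ℂ`; `ℂ[[z,t]]` is realized as
`MvPowerSeries (Fin n) (PowerSeries ℂ)` (power series in `z` with coefficients in `ℂ[[t]]`),
and `ℂ[t][[z]]` as `MvPowerSeries (Fin n) (Polynomial ℂ)`.  Substitution, partial
derivatives, Jacobian matrices, order and compositional inverses are defined below.
-/

noncomputable section

section Stage1

namespace S4

open MvPowerSeries

variable {n : ℕ} {R : Type*}

/-- total degree (weight) of an exponent -/
def wt (d : Fin n →₀ ℕ) : ℕ := ∑ i, d i

lemma wt_finsupp_sum (d : Fin n →₀ ℕ) : (d.sum fun _ e => e) = wt d := by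
  rw [wt, Finsupp.sum_fintype]
  intro _; rfl

lemma wt_add (u v : Fin n →₀ ℕ) : wt (u + v) = wt u + wt v := by
  simp [wt, Finsupp.add_apply, Finset.sum_add_distrib]

lemma wt_eq_zero {d : Fin n →₀ ℕ} (h : wt d = 0) : d = 0 := by
  ext i
  have := Finset.sum_eq_zero_iff.mp h i (Finset.mem_univ i)
  simpa using this

lemma wt_single (j : Fin n) : wt (Finsupp.single j 1) = 1 := by
  simp [wt, Finsupp.single_apply]

lemma wt_lt_one_iff {d : Fin n →₀ ℕ} : wt d < 1 ↔ d = 0 := by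
  constructor
  · intro h; exact wt_eq_zero (Nat.lt_one_iff.mp h)
  · rintro rfl; simp [wt]

section CommSemiringR
variable [CommSemiring R]

lemma ordGE_iff {k : ℕ} {f : MvPowerSeries (Fin n) R} :
    ordGE k f ↔ ∀ d : Fin n →₀ ℕ, wt d < k → MvPowerSeries.coeff (R := R) d f = 0 := by
  unfold ordGE
  constructor <;> intro h d hd
  · exact h d (by rwa [wt_finsupp_sum])
  · exact h d (by rwa [wt_finsupp_sum] at hd)

lemma coeff_PSmk (g : (Fin n →₀ ℕ) → R) (m : Fin n →₀ ℕ) :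
    MvPowerSeries.coeff (R := R) m (PSmk g) = g m := rfl

lemma ordGE_mul {p q : ℕ} {f g : MvPowerSeries (Fin n) R}
    (hf : ordGE p f) (hg : ordGE q g) : ordGE (p + q) (f * g) := by
  rw [ordGE_iff] at hf hg ⊢
  intro d hd
  rw [MvPowerSeries.coeff_mul]
  apply Finset.sum_eq_zero
  rintro ⟨u, v⟩ huv
  rw [Finset.HasAntidiagonal.mem_antidiagonal] at huv
  have hw : wt u + wt v < p + q := by rw [← wt_add, huv]; exact hd
  rcases lt_or_ge (wt u) p with h | h
  · rw [hf u h, zero_mul]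
  · rw [hg v (by omega), mul_zero]

lemma ordGE_pow {f : MvPowerSeries (Fin n) R} (hf : ordGE 1 f) (k : ℕ) :
    ordGE k (f ^ k) := by
  induction k with
  | zero => intro d hd; omega
  | succ k ih =>
    rw [pow_succ]
    exact ordGE_mul ih hf

lemma ordGE_prod_pow {a : Fin n → MvPowerSeries (Fin n) R} (ha : vordGE 1 a)
    (d : Fin n →₀ ℕ) : ordGE (wt d) (∏ i, a i ^ d i) := by
  rw [wt]
  classical
  induction (Finset.univ : Finset (Fin n)) using Finset.cons_induction with
  | empty => simp; intro e he; omega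
  | cons i s hi ih =>
    rw [Finset.prod_cons, Finset.sum_cons]
    exact ordGE_mul (ordGE_pow (ha i) (d i)) ih

lemma coeff_prod_pow_eq_zero {a : Fin n → MvPowerSeries (Fin n) R} (ha : vordGE 1 a)
    {d m : Fin n →₀ ℕ} (h : wt m < wt d) :
    MvPowerSeries.coeff (R := R) m (∏ i, a i ^ d i) = 0 :=
  (ordGE_iff.mp (ordGE_prod_pow ha d)) m h

/-- The finset of exponents of weight at most `B`. -/
def T (B : ℕ) : Finset (Fin n →₀ ℕ) :=
  (Finset.Iic (Finsupp.equivFunOnFinite.symm fun _ => B)).filter fun d => wt d ≤ B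

lemma mem_T {B : ℕ} {d : Fin n →₀ ℕ} : d ∈ (T B : Finset (Fin n →₀ ℕ)) ↔ wt d ≤ B := by
  unfold T
  rw [Finset.mem_filter, Finset.mem_Iic]
  constructor
  · exact fun h => h.2
  · intro h
    refine ⟨?_, h⟩
    intro i
    have : d i ≤ wt d := Finset.single_le_sum (f := fun i => d i) (by intros; omega)
      (Finset.mem_univ i)
    simpa using le_trans this h

end CommSemiringR

section CommRingR
variable [CommRing R]

lemma subCoeff {f : MvPowerSeries (Fin n) R} {a : Fin n → MvPowerSeries (Fin n) R}
    (ha : vordGE 1 a) (m : Fin n →₀ ℕ) :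
    MvPowerSeries.coeff (R := R) m (sub f a) =
      ∑ d ∈ T (wt m), MvPowerSeries.coeff (R := R) d f *
        MvPowerSeries.coeff (R := R) m (∏ i, a i ^ d i) := by
  show (∑ᶠ d : Fin n →₀ ℕ, MvPowerSeries.coeff (R := R) d f *
      MvPowerSeries.coeff (R := R) m (∏ i, a i ^ d i)) = _
  apply finsum_eq_sum_of_support_subset
  intro d hd
  simp only [Function.mem_support] at hd
  rw [Finset.mem_coe]
  by_contra hmem
  have : ¬ wt d ≤ wt m := fun hh => hmem (mem_T.mpr hh)
  exact hd (by rw [coeff_prod_pow_eq_zero ha (by omega), mul_zero])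

lemma sub_coeff_zero {f : MvPowerSeries (Fin n) R} {a : Fin n → MvPowerSeries (Fin n) R}
    (ha : vordGE 1 a) {m : Fin n →₀ ℕ}
    (h : ∀ d, wt d ≤ wt m → MvPowerSeries.coeff (R := R) d f = 0) :
    MvPowerSeries.coeff (R := R) m (sub f a) = 0 := by
  rw [subCoeff ha]
  apply Finset.sum_eq_zero
  intro d hd
  rw [h d (mem_T.mp hd), zero_mul]

lemma sub_add {f g : MvPowerSeries (Fin n) R} {a : Fin n → MvPowerSeries (Fin n) R}
    (ha : vordGE 1 a) : sub (f + g) a = sub f a + sub g a := by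
  ext m
  rw [map_add, subCoeff ha, subCoeff ha, subCoeff ha, ← Finset.sum_add_distrib]
  apply Finset.sum_congr rfl
  intro d _
  rw [map_add, add_mul]

/-- `sub` as an additive monoid hom in its first argument. -/
def subHom (a : Fin n → MvPowerSeries (Fin n) R) (ha : vordGE 1 a) :
    MvPowerSeries (Fin n) R →+ MvPowerSeries (Fin n) R :=
  AddMonoidHom.mk' (fun f => sub f a) (fun f g => sub_add ha)

lemma sub_monomial {a : Fin n → MvPowerSeries (Fin n) R} (ha : vordGE 1 a)
    (d : Fin n →₀ ℕ) (c : R) :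
    sub (MvPowerSeries.monomial (R := R) d c) a =
      MvPowerSeries.C (σ := Fin n) (R := R) c * ∏ i, a i ^ d i := by
  ext m
  rw [subCoeff ha, MvPowerSeries.coeff_C_mul]
  classical
  have hsum : (∑ d' ∈ T (wt m), MvPowerSeries.coeff (R := R) d' (MvPowerSeries.monomial (R := R) d c) *
      MvPowerSeries.coeff (R := R) m (∏ i, a i ^ d' i)) =
      if d ∈ (T (wt m) : Finset (Fin n →₀ ℕ)) then
        c * MvPowerSeries.coeff (R := R) m (∏ i, a i ^ d i) else 0 := by
    rw [← Finset.sum_ite_eq' (T (wt m)) d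
      (fun d' => c * MvPowerSeries.coeff (R := R) m (∏ i, a i ^ d' i))]
    apply Finset.sum_congr rfl
    intro d' _
    rw [MvPowerSeries.coeff_monomial]
    by_cases h : d' = d
    · subst h; simp
    · simp [h, Ne.symm h]
  rw [hsum]
  by_cases h : d ∈ (T (wt m) : Finset (Fin n →₀ ℕ))
  · simp [h]
  · rw [if_neg h]
    have : wt m < wt d := by
      by_contra hc
      exact h (mem_T.mpr (by omega))
    rw [coeff_prod_pow_eq_zero ha this, mul_zero]

end CommRingR

end S4
end Stage1
section Stage2
namespace S4
open MvPowerSeries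

variable {n : ℕ} {R : Type*}

section CommRingR
variable [CommRing R]

/-- truncation keeping coefficients of weight `≤ B` -/
def truncW (B : ℕ) (f : MvPowerSeries (Fin n) R) : MvPowerSeries (Fin n) R :=
  ∑ d ∈ T B, MvPowerSeries.monomial (R := R) d (MvPowerSeries.coeff (R := R) d f)

lemma coeff_truncW (B : ℕ) (f : MvPowerSeries (Fin n) R) (e : Fin n →₀ ℕ) :
    MvPowerSeries.coeff (R := R) e (truncW B f) =
      if wt e ≤ B then MvPowerSeries.coeff (R := R) e f else 0 := by
  classical
  unfold truncW
  rw [map_sum]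
  have hsum : (∑ d ∈ T B, MvPowerSeries.coeff (R := R) e
      (MvPowerSeries.monomial (R := R) d (MvPowerSeries.coeff (R := R) d f))) =
      if e ∈ (T B : Finset (Fin n →₀ ℕ)) then MvPowerSeries.coeff (R := R) e f else 0 := by
    rw [← Finset.sum_ite_eq' (T B) e (fun d => MvPowerSeries.coeff (R := R) d f)]
    apply Finset.sum_congr rfl
    intro d _
    rw [MvPowerSeries.coeff_monomial]
    by_cases h : e = d
    · subst h; simp
    · simp [h, Ne.symm h]
  rw [hsum]
  by_cases h : wt e ≤ B
  · rw [if_pos (mem_T.mpr h), if_pos h]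
  · rw [if_neg (fun hm => h (mem_T.mp hm)), if_neg h]

/-- Master truncation lemma: two additive functionals that kill series with
vanishing low-order coefficients and agree on low-order monomials agree everywhere. -/
lemma master {A : Type*} [AddCommGroup A] (B : ℕ)
    (Φ Ψ : MvPowerSeries (Fin n) R →+ A)
    (hΦ0 : ∀ f, (∀ d, wt d ≤ B → MvPowerSeries.coeff (R := R) d f = 0) → Φ f = 0)
    (hΨ0 : ∀ f, (∀ d, wt d ≤ B → MvPowerSeries.coeff (R := R) d f = 0) → Ψ f = 0)
    (hm : ∀ d c, wt d ≤ B → Φ (MvPowerSeries.monomial (R := R) d c) =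
      Ψ (MvPowerSeries.monomial (R := R) d c))
    (f : MvPowerSeries (Fin n) R) : Φ f = Ψ f := by
  have hres : ∀ d, wt d ≤ B → MvPowerSeries.coeff (R := R) d (f - truncW B f) = 0 := by
    intro d hd
    rw [map_sub, coeff_truncW, if_pos hd, sub_self]
  have h1 : Φ f = Φ (truncW B f) := by
    have h := hΦ0 _ hres
    rw [map_sub, sub_eq_zero] at h
    exact h
  have h2 : Ψ f = Ψ (truncW B f) := by
    have h := hΨ0 _ hres
    rw [map_sub, sub_eq_zero] at h
    exact h
  rw [h1, h2]
  unfold truncW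
  rw [map_sum, map_sum]
  apply Finset.sum_congr rfl
  intro d hd
  exact hm d _ (mem_T.mp hd)

end CommRingR
end S4
end Stage2
section Stage2b
namespace S4
open MvPowerSeries

variable {n : ℕ} {R : Type*}

section CommSemiringR
variable [CommSemiring R]

lemma coeff_pd (j : Fin n) (f : MvPowerSeries (Fin n) R) (m : Fin n →₀ ℕ) :
    MvPowerSeries.coeff (R := R) m (pd j f) =
      (m j + 1) • MvPowerSeries.coeff (R := R) (m + Finsupp.single j 1) f := rfl

lemma pd_add (j : Fin n) (f g : MvPowerSeries (Fin n) R) :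
    pd j (f + g) = pd j f + pd j g := by
  ext m
  rw [map_add, coeff_pd, coeff_pd, coeff_pd, map_add, smul_add]

lemma pd_monomial (j : Fin n) (d : Fin n →₀ ℕ) (c : R) :
    pd j (MvPowerSeries.monomial (R := R) d c) =
      d j • MvPowerSeries.monomial (R := R) (d - Finsupp.single j 1) c := by
  classical
  ext e
  rw [coeff_pd, MvPowerSeries.coeff_monomial, map_nsmul, MvPowerSeries.coeff_monomial]
  by_cases h : e + Finsupp.single j 1 = d
  · have hdj : d j = e j + 1 := by rw [← h]; simp
    have he : e = d - Finsupp.single j 1 := by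
      rw [← h]; ext i
      simp only [Finsupp.tsub_apply, Finsupp.add_apply, Finsupp.single_apply]
      by_cases hij : j = i
      · subst hij; simp
      · rw [if_neg hij]; omega
    rw [if_pos h, if_pos he, hdj]
  · rw [if_neg h, smul_zero]
    by_cases h2 : e = d - Finsupp.single j 1
    · rcases Nat.eq_zero_or_pos (d j) with h3 | h3
      · rw [h3, zero_smul]
      · exfalso; apply h; subst h2; ext i
        simp only [Finsupp.add_apply, Finsupp.tsub_apply, Finsupp.single_apply]
        by_cases hij : j = i
        · subst hij; simp only [if_true, eq_self_iff_true]; omega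
        · rw [if_neg hij]; omega
    · rw [if_neg h2, smul_zero]

lemma pd_C (j : Fin n) (c : R) : pd j (MvPowerSeries.C (σ := Fin n) (R := R) c) = 0 := by
  ext e
  rw [coeff_pd, MvPowerSeries.coeff_C, map_zero]
  have : e + Finsupp.single j 1 ≠ 0 := by
    intro h
    have := DFunLike.congr_fun h j
    simp at this
  rw [if_neg this, smul_zero]

lemma pd_one (j : Fin n) : pd j (1 : MvPowerSeries (Fin n) R) = 0 := by
  have : (1 : MvPowerSeries (Fin n) R) = MvPowerSeries.C (σ := Fin n) (R := R) 1 := by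
    simp
  rw [this, pd_C]

lemma pd_sub' {R : Type*} [CommRing R] (j : Fin n) (f g : MvPowerSeries (Fin n) R) :
    pd j (f - g) = pd j f - pd j g := by
  ext m
  rw [map_sub, coeff_pd, coeff_pd, coeff_pd, map_sub, smul_sub]

lemma pd_X (j i : Fin n) :
    pd j (MvPowerSeries.X i : MvPowerSeries (Fin n) R) =
      if j = i then 1 else 0 := by
  classical
  have hX : (MvPowerSeries.X i : MvPowerSeries (Fin n) R) =
      MvPowerSeries.monomial (R := R) (Finsupp.single i 1) 1 := rfl
  rw [hX, pd_monomial]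
  by_cases h : j = i
  · subst h
    simp [MvPowerSeries.monomial_zero_eq_C]
  · have : Finsupp.single i 1 j = 0 := by simp [Finsupp.single_apply, Ne.symm h]
    rw [this, zero_smul, if_neg h]

end CommSemiringR
end S4
end Stage2b
section Stage3
namespace S4
open MvPowerSeries

variable {n : ℕ}

local notation "D" => PowerSeries.derivativeFun (R := ℂ)

lemma coeff_dt (f : PSZT n) (m : Fin n →₀ ℕ) :
    MvPowerSeries.coeff (R := (PowerSeries ℂ)) m (dt f) =
      D (MvPowerSeries.coeff (R := (PowerSeries ℂ)) m f) := by
  show (PowerSeries.mk fun k => ((k + 1 : ℕ) : ℂ) *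
      PowerSeries.coeff (R := ℂ) (k + 1) (MvPowerSeries.coeff m f)) = _
  ext k
  rw [PowerSeries.coeff_mk]
  show _ = PowerSeries.coeff k (PowerSeries.derivative ℂ _)
  rw [PowerSeries.coeff_derivative]
  push_cast
  ring

lemma D_zero : D (0 : PowerSeries ℂ) = 0 := by
  have h : D (PowerSeries.C (R := ℂ) 0) = 0 := PowerSeries.derivativeFun_C
  rwa [map_zero] at h

lemma D_sum {α : Type*} (s : Finset α) (f : α → PowerSeries ℂ) :
    D (∑ i ∈ s, f i) = ∑ i ∈ s, D (f i) := by
  classical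
  induction s using Finset.cons_induction with
  | empty => simp [D_zero]
  | cons a s ha ih =>
    rw [Finset.sum_cons, Finset.sum_cons, PowerSeries.derivativeFun_add, ih]

lemma dt_add (f g : PSZT n) : dt (f + g) = dt f + dt g := by
  ext m
  rw [map_add, coeff_dt, coeff_dt, coeff_dt, map_add, PowerSeries.derivativeFun_add]

lemma dt_sub (f g : PSZT n) : dt (f - g) = dt f - dt g := by
  have h := dt_add (f - g) g
  rw [sub_add_cancel] at h
  rw [h]; ring

lemma dt_mul (f g : PSZT n) : dt (f * g) = dt f * g + f * dt g := by
  classical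
  apply MvPowerSeries.ext; intro m
  rw [map_add, coeff_dt, MvPowerSeries.coeff_mul, MvPowerSeries.coeff_mul,
    MvPowerSeries.coeff_mul, D_sum, ← Finset.sum_add_distrib]
  apply Finset.sum_congr rfl
  rintro ⟨u, v⟩ _
  show D (MvPowerSeries.coeff u f * MvPowerSeries.coeff v g) = _
  rw [PowerSeries.derivativeFun_mul, coeff_dt, coeff_dt]
  simp only [smul_eq_mul]
  ring

lemma dt_C (c : PowerSeries ℂ) :
    dt (MvPowerSeries.C (σ := Fin n) (R := (PowerSeries ℂ)) c) =
      MvPowerSeries.C (σ := Fin n) (R := (PowerSeries ℂ)) (D c) := by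
  ext m
  rw [coeff_dt, MvPowerSeries.coeff_C, MvPowerSeries.coeff_C]
  by_cases h : m = 0
  · simp [h]
  · simp [h, D_zero]

lemma dt_monomial (d : Fin n →₀ ℕ) (c : PowerSeries ℂ) :
    dt (MvPowerSeries.monomial (R := (PowerSeries ℂ)) d c) =
      MvPowerSeries.monomial (R := (PowerSeries ℂ)) d (D c) := by
  ext m
  rw [coeff_dt, MvPowerSeries.coeff_monomial, MvPowerSeries.coeff_monomial]
  by_cases h : m = d
  · simp [h]
  · simp [h, D_zero]

lemma dt_one : dt (1 : PSZT n) = 0 := by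
  have : (1 : PSZT n) = MvPowerSeries.C (σ := Fin n) (R := (PowerSeries ℂ)) 1 := by simp
  rw [this, dt_C, PowerSeries.derivativeFun_one, map_zero]

lemma dt_inclZ (f : MvPowerSeries (Fin n) ℂ) : dt (inclZ f) = 0 := by
  apply MvPowerSeries.ext; intro m
  rw [coeff_dt, map_zero]
  show D (MvPowerSeries.coeff m (MvPowerSeries.map (PowerSeries.C (R := ℂ)) f)) = _
  rw [MvPowerSeries.coeff_map]; exact PowerSeries.derivativeFun_C

lemma dt_X (i : Fin n) : dt (MvPowerSeries.X i : PSZT n) = 0 := by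
  have : (MvPowerSeries.X i : PSZT n) =
      MvPowerSeries.monomial (R := (PowerSeries ℂ)) (Finsupp.single i 1) 1 := rfl
  rw [this, dt_monomial, PowerSeries.derivativeFun_one, map_zero]

lemma dt_tT : dt (tT : PSZT n) = 1 := by
  unfold tT
  rw [dt_C]
  have : D (PowerSeries.X : PowerSeries ℂ) = 1 := by
    have := PowerSeries.derivative_X (R := ℂ)
    exact this
  rw [this, map_one]

lemma pd_tT (j : Fin n) : pd j (tT : PSZT n) = 0 := pd_C j _

lemma pd_inclZ (j : Fin n) (f : MvPowerSeries (Fin n) ℂ) :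
    pd j (inclZ f) = inclZ (pd j f) := by
  apply MvPowerSeries.ext; intro m
  show _ = MvPowerSeries.coeff m (MvPowerSeries.map (PowerSeries.C (R := ℂ)) (pd j f))
  rw [coeff_pd, MvPowerSeries.coeff_map, coeff_pd]
  show (m j + 1) • MvPowerSeries.coeff _ (MvPowerSeries.map (PowerSeries.C (R := ℂ)) f) = _
  rw [MvPowerSeries.coeff_map, map_nsmul]

end S4
end Stage3
section Stage4
namespace S4
open MvPowerSeries

variable {n : ℕ} {R : Type*} [CommRing R]

lemma wt_le_of_antidiagonal {u v m : Fin n →₀ ℕ} (h : (u, v) ∈ Finset.HasAntidiagonal.antidiagonal m) :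
    wt u ≤ wt m ∧ wt v ≤ wt m := by
  rw [Finset.HasAntidiagonal.mem_antidiagonal] at h
  have := wt_add u v
  rw [h] at this
  omega

lemma smul_monomial_congr (k : ℕ) (u v : Fin n →₀ ℕ) (c : R) (h : k ≠ 0 → u = v) :
    k • MvPowerSeries.monomial (R := R) u c = k • MvPowerSeries.monomial (R := R) v c := by
  rcases Nat.eq_zero_or_pos k with hk | hk
  · rw [hk, zero_smul, zero_smul]
  · rw [h (by omega)]

lemma pd_monomial_mul_monomial (j : Fin n) (d e : Fin n →₀ ℕ) (c c' : R) :
    pd j (MvPowerSeries.monomial (R := R) d c * MvPowerSeries.monomial (R := R) e c') =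
      pd j (MvPowerSeries.monomial (R := R) d c) * MvPowerSeries.monomial (R := R) e c' +
        MvPowerSeries.monomial (R := R) d c * pd j (MvPowerSeries.monomial (R := R) e c') := by
  classical
  rw [MvPowerSeries.monomial_mul_monomial, pd_monomial, pd_monomial, pd_monomial]
  rw [smul_mul_assoc, mul_smul_comm, MvPowerSeries.monomial_mul_monomial,
    MvPowerSeries.monomial_mul_monomial]
  have hj : (d + e) j = d j + e j := rfl
  rw [hj, add_smul]
  congr 1
  · apply smul_monomial_congr
    intro hdj
    ext i
    simp only [Finsupp.tsub_apply, Finsupp.add_apply, Finsupp.single_apply]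
    by_cases hij : j = i
    · subst hij; rw [if_pos rfl]; omega
    · rw [if_neg hij]; omega
  · apply smul_monomial_congr
    intro hej
    ext i
    simp only [Finsupp.tsub_apply, Finsupp.add_apply, Finsupp.single_apply]
    by_cases hij : j = i
    · subst hij; rw [if_pos rfl]; omega
    · rw [if_neg hij]; omega

lemma pd_mul (j : Fin n) (f g : MvPowerSeries (Fin n) R) :
    pd j (f * g) = pd j f * g + f * pd j g := by
  classical
  apply MvPowerSeries.ext; intro m
  set B := wt m + 1 with hB
  have key : ∀ g : MvPowerSeries (Fin n) R, ∀ f : MvPowerSeries (Fin n) R,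
      MvPowerSeries.coeff (R := R) m (pd j (f * g)) =
      MvPowerSeries.coeff (R := R) m (pd j f * g + f * pd j g) := by
    intro g
    refine master B
      (AddMonoidHom.mk' (fun f => MvPowerSeries.coeff (R := R) m (pd j (f * g))) ?_)
      (AddMonoidHom.mk' (fun f => MvPowerSeries.coeff (R := R) m (pd j f * g + f * pd j g)) ?_)
      ?_ ?_ ?_
    · intro f f'
      show MvPowerSeries.coeff (R := R) m (pd j ((f + f') * g)) = _
      rw [add_mul, pd_add, map_add]
    · intro f f'
      show MvPowerSeries.coeff (R := R) m (pd j (f + f') * g + (f + f') * pd j g) = _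
      rw [pd_add, add_mul, add_mul]
      show (MvPowerSeries.coeff (R := R) m) (pd j f * g + pd j f' * g + (f * pd j g + f' * pd j g)) =
        (MvPowerSeries.coeff (R := R) m) (pd j f * g + f * pd j g) +
          (MvPowerSeries.coeff (R := R) m) (pd j f' * g + f' * pd j g)
      rw [← map_add]
      congr 1
      ring
    · -- Φ vanishes
      intro f hf
      simp only [AddMonoidHom.mk'_apply]
      rw [coeff_pd, MvPowerSeries.coeff_mul]
      rw [Finset.sum_eq_zero, smul_zero]
      rintro ⟨u, v⟩ huv
      have hu : wt u ≤ wt (m + Finsupp.single j 1) := (wt_le_of_antidiagonal huv).1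
      rw [wt_add, wt_single] at hu
      rw [hf u (by omega), zero_mul]
    · -- Ψ vanishes
      intro f hf
      simp only [AddMonoidHom.mk'_apply]
      rw [map_add, MvPowerSeries.coeff_mul, MvPowerSeries.coeff_mul]
      rw [Finset.sum_eq_zero, Finset.sum_eq_zero, add_zero]
      · rintro ⟨u, v⟩ huv
        have hu : wt u ≤ wt m := (wt_le_of_antidiagonal huv).1
        rw [hf u (by omega), zero_mul]
      · rintro ⟨u, v⟩ huv
        have hu : wt u ≤ wt m := (wt_le_of_antidiagonal huv).1
        rw [coeff_pd, hf (u + Finsupp.single j 1)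
          (by rw [wt_add, wt_single]; omega), smul_zero, zero_mul]
    · -- monomials in f; now master in g
      intro d c _
      simp only [AddMonoidHom.mk'_apply]
      refine master B
        (AddMonoidHom.mk' (fun g => MvPowerSeries.coeff (R := R) m
          (pd j (MvPowerSeries.monomial (R := R) d c * g))) ?_)
        (AddMonoidHom.mk' (fun g => MvPowerSeries.coeff (R := R) m
          (pd j (MvPowerSeries.monomial (R := R) d c) * g +
            MvPowerSeries.monomial (R := R) d c * pd j g)) ?_)
        ?_ ?_ ?_ g
      · intro g g'
        show MvPowerSeries.coeff (R := R) m (pd j (MvPowerSeries.monomial (R := R) d c * (g + g'))) = _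
        rw [mul_add, pd_add, map_add]
      · intro g g'
        show MvPowerSeries.coeff (R := R) m (pd j (MvPowerSeries.monomial (R := R) d c) * (g + g') +
          MvPowerSeries.monomial (R := R) d c * pd j (g + g')) = _
        rw [pd_add, mul_add, mul_add]
        show (MvPowerSeries.coeff (R := R) m) (pd j (MvPowerSeries.monomial (R := R) d c) * g +
            pd j (MvPowerSeries.monomial (R := R) d c) * g' +
            (MvPowerSeries.monomial (R := R) d c * pd j g + MvPowerSeries.monomial (R := R) d c * pd j g')) =
          (MvPowerSeries.coeff (R := R) m) (pd j (MvPowerSeries.monomial (R := R) d c) * g +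
            MvPowerSeries.monomial (R := R) d c * pd j g) +
          (MvPowerSeries.coeff (R := R) m) (pd j (MvPowerSeries.monomial (R := R) d c) * g' +
            MvPowerSeries.monomial (R := R) d c * pd j g')
        rw [← map_add]
        congr 1
        ring
      · intro g hg
        simp only [AddMonoidHom.mk'_apply]
        rw [coeff_pd, MvPowerSeries.coeff_mul]
        rw [Finset.sum_eq_zero, smul_zero]
        rintro ⟨u, v⟩ huv
        have hv : wt v ≤ wt (m + Finsupp.single j 1) := (wt_le_of_antidiagonal huv).2
        rw [wt_add, wt_single] at hv
        rw [hg v (by omega), mul_zero]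
      · intro g hg
        simp only [AddMonoidHom.mk'_apply]
        rw [map_add, MvPowerSeries.coeff_mul, MvPowerSeries.coeff_mul]
        rw [Finset.sum_eq_zero, Finset.sum_eq_zero, add_zero]
        · rintro ⟨u, v⟩ huv
          have hv : wt v ≤ wt m := (wt_le_of_antidiagonal huv).2
          rw [coeff_pd, hg (v + Finsupp.single j 1)
            (by rw [wt_add, wt_single]; omega), smul_zero, mul_zero]
        · rintro ⟨u, v⟩ huv
          have hv : wt v ≤ wt m := (wt_le_of_antidiagonal huv).2
          rw [hg v (by omega), mul_zero]
      · intro e c' _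
        simp only [AddMonoidHom.mk'_apply]
        congr 1
        exact pd_monomial_mul_monomial j d e c c'
  exact key g f


end S4
end Stage4
section Stage5
namespace S4
open MvPowerSeries

variable {n : ℕ} {R : Type*} [CommRing R]

section Der
variable (δ : MvPowerSeries (Fin n) R → MvPowerSeries (Fin n) R)

lemma der_pow (hone : δ 1 = 0) (hmul : ∀ x y, δ (x * y) = δ x * y + x * δ y)
    (x : MvPowerSeries (Fin n) R) (m : ℕ) :
    δ (x ^ m) = m • (x ^ (m - 1) * δ x) := by
  induction m with
  | zero => rw [pow_zero, hone, zero_smul]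
  | succ m ih =>
    rw [pow_succ, hmul, ih, smul_mul_assoc, Nat.add_sub_cancel, succ_nsmul]
    congr 1
    rcases Nat.eq_zero_or_pos m with hm | hm
    · subst hm; simp
    · congr 1
      rw [show x ^ (m - 1) * δ x * x = x ^ (m - 1) * x * δ x by ring, ← pow_succ]
      congr 2
      omega

lemma der_prod (hone : δ 1 = 0) (hmul : ∀ x y, δ (x * y) = δ x * y + x * δ y)
    {α : Type*} [DecidableEq α] (s : Finset α) (g : α → MvPowerSeries (Fin n) R) :
    δ (∏ i ∈ s, g i) = ∑ k ∈ s, δ (g k) * ∏ i ∈ s.erase k, g i := by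
  induction s using Finset.induction_on with
  | empty => simpa using hone
  | @insert a s ha ih =>
    rw [Finset.prod_insert ha, hmul, ih, Finset.sum_insert ha, Finset.erase_insert ha]
    congr 1
    rw [Finset.mul_sum]
    apply Finset.sum_congr rfl
    intro k hk
    have hka : k ≠ a := fun h => ha (h ▸ hk)
    rw [Finset.erase_insert_of_ne (Ne.symm hka), Finset.prod_insert (fun h => ha (Finset.mem_of_mem_erase h))]
    ring

lemma der_prod_pow (hone : δ 1 = 0) (hmul : ∀ x y, δ (x * y) = δ x * y + x * δ y)
    (a : Fin n → MvPowerSeries (Fin n) R) (d : Fin n →₀ ℕ) :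
    δ (∏ i, a i ^ d i) =
      ∑ k, d k • ((∏ i, a i ^ (((d - Finsupp.single k 1) : Fin n →₀ ℕ) i)) * δ (a k)) := by
  classical
  rw [der_prod δ hone hmul]
  apply Finset.sum_congr rfl
  intro k _
  rw [der_pow δ hone hmul]
  set e : Fin n →₀ ℕ := d - Finsupp.single k 1 with he
  have hek : e k = d k - 1 := by
    rw [he]; simp [Finsupp.single_apply]
  have hei : ∀ i, i ≠ k → e i = d i := by
    intro i hi
    rw [he]
    simp [Finsupp.single_apply, Ne.symm hi]
  have hprod : (∏ i, a i ^ e i) =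
      a k ^ (d k - 1) * ∏ i ∈ Finset.univ.erase k, a i ^ d i := by
    rw [← Finset.mul_prod_erase Finset.univ (fun i => a i ^ e i)
      (Finset.mem_univ k)]
    congr 1
    · rw [hek]
    · apply Finset.prod_congr rfl
      intro i hi
      rw [hei i (Finset.ne_of_mem_erase hi)]
  rw [hprod, smul_mul_assoc]
  congr 1
  ring

end Der

lemma ordGE_zero (f : MvPowerSeries (Fin n) R) : ordGE 0 f := by
  intro d hd; omega

lemma ordGE_X (i : Fin n) : ordGE 1 (MvPowerSeries.X i : MvPowerSeries (Fin n) R) := by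
  rw [ordGE_iff]
  intro d hd
  rw [wt_lt_one_iff] at hd
  subst hd
  classical
  rw [MvPowerSeries.coeff_X]
  have : (0 : Fin n →₀ ℕ) ≠ Finsupp.single i 1 := by
    intro h
    have := DFunLike.congr_fun h i
    simp at this
  rw [if_neg this]

lemma ordGE_add {k : ℕ} {f g : MvPowerSeries (Fin n) R} (hf : ordGE k f) (hg : ordGE k g) :
    ordGE k (f + g) := by
  intro d hd
  rw [map_add, hf d hd, hg d hd, add_zero]

lemma ordGE_sub {k : ℕ} {f g : MvPowerSeries (Fin n) R} (hf : ordGE k f) (hg : ordGE k g) :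
    ordGE k (f - g) := by
  intro d hd
  rw [map_sub, hf d hd, hg d hd, sub_zero]

lemma ordGE_mul_left {k : ℕ} {f g : MvPowerSeries (Fin n) R} (hg : ordGE k g) :
    ordGE k (f * g) := by
  have := ordGE_mul (ordGE_zero f) hg
  simpa using this

lemma ordGE_map {S : Type*} [CommRing S] (φ : R →+* S) {k : ℕ} {f : MvPowerSeries (Fin n) R}
    (hf : ordGE k f) : ordGE k (MvPowerSeries.map (σ := Fin n) φ f) := by
  intro d hd
  rw [MvPowerSeries.coeff_map, hf d hd, map_zero]

lemma sub_C (c : R) {a : Fin n → MvPowerSeries (Fin n) R} (ha : vordGE 1 a) :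
    sub (MvPowerSeries.C (σ := Fin n) (R := R) c) a = MvPowerSeries.C (σ := Fin n) (R := R) c := by
  rw [← MvPowerSeries.monomial_zero_eq_C_apply, sub_monomial ha]
  simp [MvPowerSeries.monomial_zero_eq_C_apply]

lemma sub_nsmul {a : Fin n → MvPowerSeries (Fin n) R} (ha : vordGE 1 a)
    (k : ℕ) (f : MvPowerSeries (Fin n) R) : sub (k • f) a = k • sub f a :=
  map_nsmul (subHom a ha) k f

lemma sub_finsum {a : Fin n → MvPowerSeries (Fin n) R} (ha : vordGE 1 a)
    {α : Type*} (s : Finset α) (g : α → MvPowerSeries (Fin n) R) :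
    sub (∑ i ∈ s, g i) a = ∑ i ∈ s, sub (g i) a :=
  map_sum (subHom a ha) g s

lemma sub_mul' {a : Fin n → MvPowerSeries (Fin n) R} (ha : vordGE 1 a)
    (f g : MvPowerSeries (Fin n) R) : sub (f * g) a = sub f a * sub g a := by
  classical
  apply MvPowerSeries.ext; intro m
  set B := wt m with hB
  have key : ∀ g f : MvPowerSeries (Fin n) R,
      MvPowerSeries.coeff (R := R) m (sub (f * g) a) =
      MvPowerSeries.coeff (R := R) m (sub f a * sub g a) := by
    intro g
    refine master B
      (AddMonoidHom.mk' (fun f => MvPowerSeries.coeff (R := R) m (sub (f * g) a)) ?_)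
      (AddMonoidHom.mk' (fun f => MvPowerSeries.coeff (R := R) m (sub f a * sub g a)) ?_)
      ?_ ?_ ?_
    · intro f f'
      show MvPowerSeries.coeff (R := R) m (sub ((f + f') * g) a) = _
      rw [add_mul, sub_add ha, map_add]
    · intro f f'
      show MvPowerSeries.coeff (R := R) m (sub (f + f') a * sub g a) = _
      rw [sub_add ha, add_mul, map_add]
    · intro f hf
      simp only [AddMonoidHom.mk'_apply]
      apply sub_coeff_zero ha
      intro d hd
      rw [MvPowerSeries.coeff_mul]
      apply Finset.sum_eq_zero
      rintro ⟨u, v⟩ huv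
      have hu : wt u ≤ wt d := (wt_le_of_antidiagonal huv).1
      rw [hf u (le_trans hu hd), zero_mul]
    · intro f hf
      simp only [AddMonoidHom.mk'_apply]
      rw [MvPowerSeries.coeff_mul]
      apply Finset.sum_eq_zero
      rintro ⟨u, v⟩ huv
      have hu : wt u ≤ wt m := (wt_le_of_antidiagonal huv).1
      rw [sub_coeff_zero ha (fun d hd => hf d (le_trans hd hu)), zero_mul]
    · intro d c _
      simp only [AddMonoidHom.mk'_apply]
      refine master B
        (AddMonoidHom.mk' (fun g => MvPowerSeries.coeff (R := R) m
          (sub (MvPowerSeries.monomial (R := R) d c * g) a)) ?_)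
        (AddMonoidHom.mk' (fun g => MvPowerSeries.coeff (R := R) m
          (sub (MvPowerSeries.monomial (R := R) d c) a * sub g a)) ?_)
        ?_ ?_ ?_ g
      · intro g g'
        show MvPowerSeries.coeff (R := R) m (sub (MvPowerSeries.monomial (R := R) d c * (g + g')) a) = _
        rw [mul_add, sub_add ha, map_add]
      · intro g g'
        show MvPowerSeries.coeff (R := R) m
          (sub (MvPowerSeries.monomial (R := R) d c) a * sub (g + g') a) = _
        rw [sub_add ha, mul_add, map_add]
      · intro g hg
        simp only [AddMonoidHom.mk'_apply]
        apply sub_coeff_zero ha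
        intro e he
        rw [MvPowerSeries.coeff_mul]
        apply Finset.sum_eq_zero
        rintro ⟨u, v⟩ huv
        have hv : wt v ≤ wt e := (wt_le_of_antidiagonal huv).2
        rw [hg v (le_trans hv he), mul_zero]
      · intro g hg
        simp only [AddMonoidHom.mk'_apply]
        rw [MvPowerSeries.coeff_mul]
        apply Finset.sum_eq_zero
        rintro ⟨u, v⟩ huv
        have hv : wt v ≤ wt m := (wt_le_of_antidiagonal huv).2
        rw [sub_coeff_zero ha (fun e he => hg e (le_trans he hv)), mul_zero]
      · intro e c' _
        simp only [AddMonoidHom.mk'_apply]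
        congr 1
        rw [MvPowerSeries.monomial_mul_monomial, sub_monomial ha, sub_monomial ha,
          sub_monomial ha]
        rw [map_mul]
        have : (∏ i, a i ^ (d + e) i) = (∏ i, a i ^ d i) * ∏ i, a i ^ e i := by
          rw [← Finset.prod_mul_distrib]
          apply Finset.prod_congr rfl
          intro i _
          rw [← pow_add]
          rfl
        rw [this]
        ring
  exact key g f

lemma prod_monomial_one {α : Type*} (s : Finset α) (e : α → (Fin n →₀ ℕ)) :
    (∏ i ∈ s, MvPowerSeries.monomial (R := R) (e i) 1) =
      MvPowerSeries.monomial (R := R) (∑ i ∈ s, e i) 1 := by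
  classical
  induction s using Finset.induction_on with
  | empty => simp [MvPowerSeries.monomial_zero_eq_C_apply]
  | @insert a s ha ih =>
    rw [Finset.prod_insert ha, Finset.sum_insert ha, ih,
      MvPowerSeries.monomial_mul_monomial, one_mul]

lemma prod_X_pow (d : Fin n →₀ ℕ) :
    (∏ i, (MvPowerSeries.X i : MvPowerSeries (Fin n) R) ^ d i) =
      MvPowerSeries.monomial (R := R) d 1 := by
  classical
  have h1 : ∀ i : Fin n, (MvPowerSeries.X i : MvPowerSeries (Fin n) R) ^ d i =
      MvPowerSeries.monomial (R := R) (Finsupp.single i (d i)) 1 := fun i =>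
    MvPowerSeries.X_pow_eq i (d i)
  rw [Finset.prod_congr rfl (fun i _ => h1 i), prod_monomial_one]
  have hsum : (∑ i, Finsupp.single i (d i)) = d := by
    ext j
    rw [Finsupp.finset_sum_apply]
    simp only [Finsupp.single_apply]
    rw [Finset.sum_ite_eq' Finset.univ j (fun i => d i)]
    simp
  rw [hsum]

lemma vordGE_X : vordGE 1 (fun i => (MvPowerSeries.X i : MvPowerSeries (Fin n) R)) :=
  fun i => ordGE_X i

lemma sub_id (f : MvPowerSeries (Fin n) R) :
    sub f (fun i => MvPowerSeries.X i) = f := by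
  classical
  apply MvPowerSeries.ext; intro m
  rw [subCoeff vordGE_X m]
  have : ∀ d ∈ T (wt m), MvPowerSeries.coeff (R := R) d f *
      MvPowerSeries.coeff (R := R) m (∏ i, (MvPowerSeries.X i : MvPowerSeries (Fin n) R) ^ d i) =
      if d = m then MvPowerSeries.coeff (R := R) d f else 0 := by
    intro d _
    rw [prod_X_pow, MvPowerSeries.coeff_monomial]
    by_cases h : m = d
    · subst h; simp
    · rw [if_neg h, if_neg (Ne.symm h), mul_zero]
  rw [Finset.sum_congr rfl this, Finset.sum_ite_eq' (T (wt m)) m (fun d => MvPowerSeries.coeff (R := R) d f)]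
  rw [if_pos (mem_T.mpr (le_refl _))]

lemma sub_X_apply {a : Fin n → MvPowerSeries (Fin n) R} (ha : vordGE 1 a) (i : Fin n) :
    sub (MvPowerSeries.X i) a = a i := by
  have hX : (MvPowerSeries.X i : MvPowerSeries (Fin n) R) =
      MvPowerSeries.monomial (R := R) (Finsupp.single i 1) 1 := rfl
  rw [hX, sub_monomial ha]
  rw [Finset.prod_eq_single i]
  · simp
  · intro j _ hj
    have : Finsupp.single i 1 j = 0 := by simp [Finsupp.single_apply, Ne.symm hj]
    rw [this, pow_zero]
  · intro h
    exact absurd (Finset.mem_univ i) h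

/-- Ring hom commutes with substitution. -/
lemma map_sub_comm {S : Type*} [CommRing S] (φ : R →+* S)
    {a : Fin n → MvPowerSeries (Fin n) R} (ha : vordGE 1 a) (f : MvPowerSeries (Fin n) R) :
    MvPowerSeries.map (σ := Fin n) φ (sub f a) =
      sub (MvPowerSeries.map (σ := Fin n) φ f) (fun i => MvPowerSeries.map (σ := Fin n) φ (a i)) := by
  classical
  have ha' : vordGE 1 (fun i => MvPowerSeries.map (σ := Fin n) φ (a i)) := by
    intro i
    exact ordGE_map φ (ha i)
  apply MvPowerSeries.ext; intro m
  rw [MvPowerSeries.coeff_map, subCoeff ha m, subCoeff ha' m, map_sum]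
  apply Finset.sum_congr rfl
  intro d _
  rw [map_mul, MvPowerSeries.coeff_map]
  congr 1
  rw [← MvPowerSeries.coeff_map]
  congr 1
  rw [map_prod]
  apply Finset.prod_congr rfl
  intro i _
  rw [map_pow]

lemma sub_sub' {a : Fin n → MvPowerSeries (Fin n) R} (ha : vordGE 1 a)
    (f g : MvPowerSeries (Fin n) R) : sub (f - g) a = sub f a - sub g a :=
  map_sub (subHom a ha) f g

end S4
end Stage5
section Stage6
namespace S4
open MvPowerSeries

variable {n : ℕ} {R : Type*} [CommRing R]

/-- common monomial-case computation -/
lemma chain_monomial_sum {a : Fin n → MvPowerSeries (Fin n) R} (ha : vordGE 1 a)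
    (δ : MvPowerSeries (Fin n) R → MvPowerSeries (Fin n) R)
    (hone : δ 1 = 0) (hmul : ∀ x y, δ (x * y) = δ x * y + x * δ y)
    (d : Fin n →₀ ℕ) (c : R) :
    MvPowerSeries.C (σ := Fin n) (R := R) c * δ (∏ i, a i ^ d i) =
      ∑ k, sub (pd k (MvPowerSeries.monomial (R := R) d c)) a * δ (a k) := by
  rw [der_prod_pow δ hone hmul a d, Finset.mul_sum]
  apply Finset.sum_congr rfl
  intro k _
  rw [pd_monomial, sub_nsmul ha, sub_monomial ha, smul_mul_assoc, mul_smul_comm]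
  congr 1
  ring

lemma pd_chain {a : Fin n → MvPowerSeries (Fin n) R} (ha : vordGE 1 a) (j : Fin n)
    (f : MvPowerSeries (Fin n) R) :
    pd j (sub f a) = ∑ k, sub (pd k f) a * pd j (a k) := by
  classical
  apply MvPowerSeries.ext; intro m
  set B := wt m + 1 with hB
  refine master B
    (AddMonoidHom.mk' (fun f => MvPowerSeries.coeff (R := R) m (pd j (sub f a))) ?_)
    (AddMonoidHom.mk' (fun f => MvPowerSeries.coeff (R := R) m
      (∑ k, sub (pd k f) a * pd j (a k))) ?_)
    ?_ ?_ ?_ f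
  · intro f f'
    show MvPowerSeries.coeff (R := R) m (pd j (sub (f + f') a)) = _
    rw [sub_add ha, pd_add, map_add]
  · intro f f'
    show MvPowerSeries.coeff (R := R) m (∑ k, sub (pd k (f + f')) a * pd j (a k)) = _
    rw [← map_add]
    congr 1
    rw [← Finset.sum_add_distrib]
    apply Finset.sum_congr rfl
    intro k _
    rw [pd_add, sub_add ha, add_mul]
  · intro f hf
    simp only [AddMonoidHom.mk'_apply]
    rw [coeff_pd]
    rw [sub_coeff_zero ha, smul_zero]
    intro d hd
    have hwd : wt d ≤ B := by
      have := wt_add m (Finsupp.single j 1)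
      rw [wt_single] at this
      omega
    exact hf d hwd
  · intro f hf
    simp only [AddMonoidHom.mk'_apply]
    rw [map_sum]
    apply Finset.sum_eq_zero
    intro k _
    rw [MvPowerSeries.coeff_mul]
    apply Finset.sum_eq_zero
    rintro ⟨u, v⟩ huv
    have hu : wt u ≤ wt m := (wt_le_of_antidiagonal huv).1
    rw [sub_coeff_zero ha, zero_mul]
    intro d hd
    have hd' : wt d ≤ wt u := hd
    rw [coeff_pd]
    rw [hf (d + Finsupp.single k 1) (by rw [wt_add, wt_single]; omega), smul_zero]
  · intro d c _
    simp only [AddMonoidHom.mk'_apply]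
    congr 1
    rw [sub_monomial ha, pd_mul, pd_C, zero_mul, zero_add]
    exact chain_monomial_sum ha (pd j) (pd_one j) (pd_mul j) d c

lemma dt_chain {n : ℕ} {a : Fin n → PSZT n} (ha : vordGE 1 a) (f : PSZT n) :
    dt (sub f a) = sub (dt f) a + ∑ k, sub (pd k f) a * dt (a k) := by
  classical
  apply MvPowerSeries.ext; intro m
  set B := wt m + 1 with hB
  refine master B
    (AddMonoidHom.mk' (fun f => MvPowerSeries.coeff (R := (PowerSeries ℂ)) m (dt (sub f a))) ?_)
    (AddMonoidHom.mk' (fun f => MvPowerSeries.coeff (R := (PowerSeries ℂ)) m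
      (sub (dt f) a + ∑ k, sub (pd k f) a * dt (a k))) ?_)
    ?_ ?_ ?_ f
  · intro f f'
    show MvPowerSeries.coeff (R := (PowerSeries ℂ)) m (dt (sub (f + f') a)) = _
    rw [sub_add ha, dt_add, map_add]
  · intro f f'
    show MvPowerSeries.coeff (R := (PowerSeries ℂ)) m
      (sub (dt (f + f')) a + ∑ k, sub (pd k (f + f')) a * dt (a k)) = _
    rw [← map_add]
    congr 1
    rw [dt_add, sub_add ha]
    have : (∑ k, sub (pd k (f + f')) a * dt (a k)) =
        (∑ k, sub (pd k f) a * dt (a k)) + ∑ k, sub (pd k f') a * dt (a k) := by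
      rw [← Finset.sum_add_distrib]
      apply Finset.sum_congr rfl
      intro k _
      rw [pd_add, sub_add ha, add_mul]
    rw [this]
    ring
  · intro f hf
    simp only [AddMonoidHom.mk'_apply]
    rw [coeff_dt]
    rw [sub_coeff_zero ha (fun d hd => hf d (by omega)), D_zero]
  · intro f hf
    simp only [AddMonoidHom.mk'_apply]
    rw [map_add]
    rw [sub_coeff_zero ha (fun d hd => by rw [coeff_dt, hf d (by omega), D_zero]), zero_add]
    rw [map_sum]
    apply Finset.sum_eq_zero
    intro k _
    rw [MvPowerSeries.coeff_mul]
    apply Finset.sum_eq_zero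
    rintro ⟨u, v⟩ huv
    have hu : wt u ≤ wt m := (wt_le_of_antidiagonal huv).1
    rw [sub_coeff_zero ha, zero_mul]
    intro d hd
    have hd' : wt d ≤ wt u := hd
    rw [coeff_pd]
    rw [hf (d + Finsupp.single k 1) (by rw [wt_add, wt_single]; omega), smul_zero]
  · intro d c _
    simp only [AddMonoidHom.mk'_apply]
    congr 1
    rw [sub_monomial ha, dt_mul, dt_C, dt_monomial, sub_monomial ha]
    rw [chain_monomial_sum ha dt dt_one dt_mul d c]

end S4
end Stage6
section Stage7
namespace S4
open MvPowerSeries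

variable {n : ℕ}

/-- coefficient of `z^d t^k` -/
def tc (k : ℕ) (d : Fin n →₀ ℕ) (f : PSZT n) : ℂ :=
  PowerSeries.coeff (R := ℂ) k (MvPowerSeries.coeff (R := (PowerSeries ℂ)) d f)

lemma tc_dt (k : ℕ) (d : Fin n →₀ ℕ) (f : PSZT n) :
    tc k d (dt f) = ((k + 1 : ℕ) : ℂ) * tc (k + 1) d f := by
  show PowerSeries.coeff (R := ℂ) k (PowerSeries.mk fun k' => ((k' + 1 : ℕ) : ℂ) *
    PowerSeries.coeff (R := ℂ) (k' + 1) (MvPowerSeries.coeff d f)) = _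
  rw [PowerSeries.coeff_mk]
  rfl

lemma tc_add (k : ℕ) (d : Fin n →₀ ℕ) (f g : PSZT n) :
    tc k d (f + g) = tc k d f + tc k d g := by
  unfold tc
  rw [map_add, map_add]

lemma tc_mul_zero {k : ℕ} {d : Fin n →₀ ℕ} (u v : PSZT n)
    (h : ∀ k' ≤ k, ∀ d', tc k' d' v = 0) : tc k d (u * v) = 0 := by
  classical
  unfold tc
  rw [MvPowerSeries.coeff_mul, map_sum]
  apply Finset.sum_eq_zero
  rintro ⟨p, q⟩ _
  rw [PowerSeries.coeff_mul]
  apply Finset.sum_eq_zero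
  rintro ⟨k1, k2⟩ hk
  rw [Finset.HasAntidiagonal.mem_antidiagonal] at hk
  have hk2 : k2 ≤ k := by omega
  have := h k2 hk2 q
  unfold tc at this
  rw [this, mul_zero]

lemma tc_pd (k : ℕ) (d : Fin n →₀ ℕ) (j : Fin n) (f : PSZT n) :
    tc k d (pd j f) = (d j + 1) • tc k (d + Finsupp.single j 1) f := by
  unfold tc
  rw [coeff_pd, map_nsmul]

lemma tc_ext_zero {f : PSZT n} (h : ∀ k d, tc k d f = 0) : f = 0 := by
  apply MvPowerSeries.ext; intro d
  rw [map_zero]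
  apply PowerSeries.ext; intro k
  rw [map_zero]
  exact h k d

lemma tc_zero_of_evalT0 {f : PSZT n} (h : evalT0 f = 0) (d : Fin n →₀ ℕ) :
    tc 0 d f = 0 := by
  unfold tc
  rw [PowerSeries.coeff_zero_eq_constantCoeff_apply]
  have h2 : MvPowerSeries.coeff (R := ℂ) d (evalT0 f) = 0 := by rw [h, map_zero]
  unfold evalT0 at h2
  rwa [MvPowerSeries.coeff_map] at h2

/-- ODE uniqueness engine -/
lemma ode_zero (E U V : Fin n → Fin n → PSZT n → PSZT n) : True := trivial

lemma ode_engine (E : Fin n → PSZT n) (U V : Fin n → Fin n → PSZT n)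
    (hdt : ∀ i, dt (E i) = ∑ j, (U i j * E j + V i j * pd j (E i)))
    (h0 : ∀ i, evalT0 (E i) = 0) : ∀ i, E i = 0 := by
  have key : ∀ k (i : Fin n) (d : Fin n →₀ ℕ), tc k d (E i) = 0 := by
    intro k
    induction k using Nat.strong_induction_on with
    | _ k IH =>
      match k with
      | 0 => exact fun i d => tc_zero_of_evalT0 (h0 i) d
      | (k + 1) =>
        intro i d
        have hlow : ∀ j, ∀ k' ≤ k, ∀ d', tc k' d' (E j) = 0 := by
          intro j k' hk' d'
          exact IH k' (by omega) j d'
        have h1 : tc k d (dt (E i)) = ((k + 1 : ℕ) : ℂ) * tc (k + 1) d (E i) := tc_dt k d (E i)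
        have h2 : tc k d (dt (E i)) = 0 := by
          rw [hdt i]
          have : ∀ j : Fin n, tc k d (U i j * E j + V i j * pd j (E i)) = 0 := by
            intro j
            rw [tc_add]
            rw [tc_mul_zero _ _ (fun k' hk' d' => hlow j k' hk' d')]
            rw [tc_mul_zero _ _ (fun k' hk' d' => by
              rw [tc_pd, hlow i k' hk' (d' + Finsupp.single j 1), smul_zero])]
            rw [add_zero]
          unfold tc
          rw [map_sum, map_sum]
          apply Finset.sum_eq_zero
          intro j _
          exact this j
        rw [h1] at h2
        have hne : ((k + 1 : ℕ) : ℂ) ≠ 0 := Nat.cast_ne_zero.mpr (by omega)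
        exact (mul_eq_zero.mp h2).resolve_left hne
  intro i
  exact tc_ext_zero (fun k d => key k i d)

lemma tc_tT_mul (k : ℕ) (d : Fin n →₀ ℕ) (g : PSZT n) :
    tc (k + 1) d (tT * g) = tc k d g := by
  unfold tc tT
  rw [MvPowerSeries.coeff_C_mul, PowerSeries.coeff_succ_X_mul]

lemma tc_tT_mul_zero (d : Fin n →₀ ℕ) (g : PSZT n) :
    tc 0 d (tT * g) = 0 := by
  unfold tc tT
  rw [MvPowerSeries.coeff_C_mul, PowerSeries.coeff_zero_X_mul]

/-- fixed point engine : E = t·(A·E) forces E = 0 -/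
lemma shift_engine (E : Fin n → PSZT n) (A : Fin n → Fin n → PSZT n)
    (h : ∀ i, E i = tT * ∑ j, A i j * E j) : ∀ i, E i = 0 := by
  have key : ∀ k (i : Fin n) (d : Fin n →₀ ℕ), tc k d (E i) = 0 := by
    intro k
    induction k using Nat.strong_induction_on with
    | _ k IH =>
      match k with
      | 0 =>
        intro i d
        rw [h i]
        exact tc_tT_mul_zero d _
      | (k + 1) =>
        intro i d
        rw [h i, tc_tT_mul]
        have : ∀ j : Fin n, tc k d (A i j * E j) = 0 := fun j =>
          tc_mul_zero _ _ (fun k' hk' d' => IH k' (by omega) j d')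
        unfold tc
        rw [map_sum, map_sum]
        apply Finset.sum_eq_zero
        intro j _
        exact this j
  intro i
  exact tc_ext_zero (fun k d => key k i d)

lemma tT_mul_cancel {x y : PSZT n} (h : tT * x = tT * y) : x = y := by
  apply MvPowerSeries.ext; intro d
  have hd : MvPowerSeries.coeff (R := (PowerSeries ℂ)) d (tT * x) =
      MvPowerSeries.coeff (R := (PowerSeries ℂ)) d (tT * y) := by rw [h]
  unfold tT at hd
  rw [MvPowerSeries.coeff_C_mul, MvPowerSeries.coeff_C_mul] at hd
  exact mul_left_cancel₀ PowerSeries.X_ne_zero hd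

end S4
end Stage7
section Stage8
namespace S4
open MvPowerSeries

variable {n : ℕ}

lemma sub_zero' {R : Type*} [CommRing R] {a : Fin n → MvPowerSeries (Fin n) R}
    (ha : vordGE 1 a) : sub (0 : MvPowerSeries (Fin n) R) a = 0 :=
  map_zero (subHom a ha)

lemma ordGE_inclZ {k : ℕ} {f : MvPowerSeries (Fin n) ℂ} (hf : ordGE k f) :
    ordGE k (inclZ f) := by
  intro d hd
  show MvPowerSeries.coeff d (MvPowerSeries.map (σ := Fin n) (PowerSeries.C (R := ℂ)) f) = 0
  rw [MvPowerSeries.coeff_map, hf d hd, map_zero]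

section Main

variable (H : Fin n → MvPowerSeries (Fin n) ℂ) (Nt : Fin n → PSZT n)

/-- the map G -/
def Gf : Fin n → PSZT n := fun j => MvPowerSeries.X j + tT * Nt j

/-- the map F -/
def Ff : Fin n → PSZT n := fun j => MvPowerSeries.X j - tT * inclZ (H j)

variable {H Nt}

lemma vord_Gf (hNt : vordGE 1 Nt) : vordGE 1 (Gf Nt) := fun j =>
  ordGE_add (ordGE_X j) (ordGE_mul_left (hNt j))

lemma vord_Ff (hH : vordGE 1 H) : vordGE 1 (Ff H) := fun j =>
  ordGE_sub (ordGE_X j) (ordGE_mul_left (ordGE_inclZ (hH j)))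

lemma sub_tT {a : Fin n → PSZT n} (ha : vordGE 1 a) : sub tT a = tT := by
  unfold tT
  exact sub_C _ ha

lemma evalT0_tT : evalT0 (tT : PSZT n) = 0 := by
  apply MvPowerSeries.ext; intro d
  show MvPowerSeries.coeff d (MvPowerSeries.map (σ := Fin n) (PowerSeries.constantCoeff (R := ℂ)) tT) = _
  rw [MvPowerSeries.coeff_map, map_zero]
  unfold tT
  rw [MvPowerSeries.coeff_C]
  split_ifs
  · exact PowerSeries.constantCoeff_X
  · exact map_zero _

lemma evalT0_X (j : Fin n) : evalT0 (MvPowerSeries.X j : PSZT n) = MvPowerSeries.X j := by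
  classical
  apply MvPowerSeries.ext; intro d
  show MvPowerSeries.coeff d (MvPowerSeries.map (σ := Fin n) (PowerSeries.constantCoeff (R := ℂ))
    (MvPowerSeries.X j)) = _
  rw [MvPowerSeries.coeff_map, MvPowerSeries.coeff_X, MvPowerSeries.coeff_X]
  split_ifs
  · exact map_one _
  · exact map_zero _

lemma evalT0_inclZ (f : MvPowerSeries (Fin n) ℂ) : evalT0 (inclZ f) = f := by
  apply MvPowerSeries.ext; intro d
  show MvPowerSeries.coeff d (MvPowerSeries.map (σ := Fin n) (PowerSeries.constantCoeff (R := ℂ))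
    (MvPowerSeries.map (σ := Fin n) (PowerSeries.C (R := ℂ)) f)) = _
  rw [MvPowerSeries.coeff_map, MvPowerSeries.coeff_map, PowerSeries.constantCoeff_C]

lemma evalT0_Gf (hNt : vordGE 1 Nt) (hinit : ∀ i, evalT0 (Nt i) = H i) :
    True := trivial

lemma evalT0_sub_comm {a : Fin n → PSZT n} (ha : vordGE 1 a) (f : PSZT n) :
    evalT0 (sub f a) = sub (evalT0 f) (fun i => evalT0 (a i)) :=
  map_sub_comm (PowerSeries.constantCoeff (R := ℂ)) ha f

lemma evalT0_sub_Gf (hNt : vordGE 1 Nt) (f : MvPowerSeries (Fin n) ℂ) :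
    evalT0 (sub (inclZ f) (Gf Nt)) = f := by
  rw [evalT0_sub_comm (vord_Gf hNt), evalT0_inclZ]
  have hfam : (fun j => evalT0 (Gf Nt j)) = fun j => MvPowerSeries.X j := by
    funext j
    show evalT0 (MvPowerSeries.X j + tT * Nt j) = _
    rw [map_add, map_mul, evalT0_tT, zero_mul, add_zero, evalT0_X]
  rw [hfam, sub_id]

lemma evalT0_sub_Ff (hH : vordGE 1 H) (f : PSZT n) :
    evalT0 (sub f (Ff H)) = sub (evalT0 f) (fun i => MvPowerSeries.X i) := by
  rw [evalT0_sub_comm (vord_Ff hH)]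
  have hfam : (fun j => evalT0 (Ff H j)) = fun j => MvPowerSeries.X j := by
    funext j
    show evalT0 (MvPowerSeries.X j - tT * inclZ (H j)) = _
    rw [map_sub, map_mul, evalT0_tT, zero_mul, sub_zero, evalT0_X]
  rw [hfam]

/-- the matrix A -/
def Amat (H : Fin n → MvPowerSeries (Fin n) ℂ) (Nt : Fin n → PSZT n) :
    Fin n → Fin n → PSZT n :=
  fun i k => sub (pd k (inclZ (H i))) (Gf Nt)

lemma dt_Gf (hNt : vordGE 1 Nt) (k : Fin n) :
    dt (Gf Nt k) = Nt k + tT * dt (Nt k) := by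
  show dt (MvPowerSeries.X k + tT * Nt k) = _
  rw [dt_add, dt_X, dt_mul, dt_tT, zero_add, one_mul]

lemma pd_Gf (j k : Fin n) :
    pd j (Gf Nt k) = (if j = k then 1 else 0) + tT * pd j (Nt k) := by
  show pd j (MvPowerSeries.X k + tT * Nt k) = _
  rw [pd_add, pd_X, pd_mul, pd_tT, zero_mul, zero_add]

lemma dt_subHZ (hNt : vordGE 1 Nt) (i : Fin n) :
    dt (sub (inclZ (H i)) (Gf Nt)) =
      (∑ k, Amat H Nt i k * Nt k) + tT * (∑ k, Amat H Nt i k * dt (Nt k)) := by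
  rw [dt_chain (vord_Gf hNt), dt_inclZ, sub_zero' (vord_Gf hNt), zero_add]
  rw [Finset.mul_sum, ← Finset.sum_add_distrib]
  apply Finset.sum_congr rfl
  intro k _
  rw [dt_Gf hNt k]
  show sub (pd k (inclZ (H i))) (Gf Nt) * (Nt k + tT * dt (Nt k)) = _
  unfold Amat
  ring

lemma pdsum_subHZ (hNt : vordGE 1 Nt) (i : Fin n) :
    (∑ j, pd j (sub (inclZ (H i)) (Gf Nt)) * Nt j) =
      (∑ k, Amat H Nt i k * Nt k) +
        tT * (∑ k, Amat H Nt i k * (∑ j, pd j (Nt k) * Nt j)) := by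
  classical
  have h1 : ∀ j, pd j (sub (inclZ (H i)) (Gf Nt)) =
      ∑ k, Amat H Nt i k * ((if j = k then 1 else 0) + tT * pd j (Nt k)) := by
    intro j
    rw [pd_chain (vord_Gf hNt)]
    apply Finset.sum_congr rfl
    intro k _
    rw [pd_Gf]
    rfl
  calc (∑ j, pd j (sub (inclZ (H i)) (Gf Nt)) * Nt j)
      = ∑ j, ∑ k, (Amat H Nt i k * (if j = k then 1 else 0) * Nt j +
          tT * (Amat H Nt i k * (pd j (Nt k) * Nt j))) := by
        apply Finset.sum_congr rfl
        intro j _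
        rw [h1 j, Finset.sum_mul]
        apply Finset.sum_congr rfl
        intro k _
        ring
    _ = (∑ j, ∑ k, Amat H Nt i k * (if j = k then 1 else 0) * Nt j) +
          ∑ j, ∑ k, tT * (Amat H Nt i k * (pd j (Nt k) * Nt j)) := by
        rw [← Finset.sum_add_distrib]
        apply Finset.sum_congr rfl
        intro j _
        rw [← Finset.sum_add_distrib]
    _ = (∑ k, Amat H Nt i k * Nt k) +
          tT * (∑ k, Amat H Nt i k * (∑ j, pd j (Nt k) * Nt j)) := by
        congr 1
        · apply Finset.sum_congr rfl
          intro j _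
          have hterm : ∀ k, (Amat H Nt i k * (if j = k then 1 else 0)) * Nt j =
              if k = j then Amat H Nt i k * Nt j else 0 := by
            intro k
            by_cases h : k = j
            · subst h; rw [if_pos rfl, if_pos rfl, mul_one]
            · rw [if_neg (fun hh => h hh.symm), if_neg h, mul_zero, zero_mul]
          rw [Finset.sum_congr rfl (fun k _ => hterm k),
            Finset.sum_ite_eq' Finset.univ j (fun k => Amat H Nt i k * Nt j)]
          simp
        · rw [Finset.sum_comm, Finset.mul_sum]
          apply Finset.sum_congr rfl
          intro k _
          rw [Finset.mul_sum, Finset.mul_sum]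

end Main
end S4
end Stage8
section Stage9
namespace S4
open MvPowerSeries

variable {n : ℕ} {H : Fin n → MvPowerSeries (Fin n) ℂ} {Nt : Fin n → PSZT n}

lemma mulVec_eq (M : Fin n → PSZT n) (i : Fin n) :
    (jac M).mulVec M i = ∑ j, pd j (M i) * M j := rfl

lemma clause1_iff (hNt : vordGE 1 Nt) :
    (∀ i, sub (MvPowerSeries.X i - tT * inclZ (H i))
        (fun j => MvPowerSeries.X j + tT * Nt j) = MvPowerSeries.X i)
    ↔ (∀ i, Nt i = sub (inclZ (H i)) (Gf Nt)) := by
  have hG : vordGE 1 (Gf Nt) := vord_Gf hNt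
  have expand : ∀ i, sub (MvPowerSeries.X i - tT * inclZ (H i)) (Gf Nt) =
      (MvPowerSeries.X i + tT * Nt i) - tT * sub (inclZ (H i)) (Gf Nt) := by
    intro i
    rw [sub_sub' hG, sub_mul' hG, sub_tT hG, sub_X_apply hG]
    rfl
  constructor
  · intro h i
    have h2 := h i
    rw [show (fun j => MvPowerSeries.X j + tT * Nt j) = Gf Nt from rfl, expand i] at h2
    have h3 : tT * Nt i - tT * sub (inclZ (H i)) (Gf Nt) = 0 := by
      have h4 : tT * Nt i - tT * sub (inclZ (H i)) (Gf Nt) =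
          (MvPowerSeries.X i + tT * Nt i - tT * sub (inclZ (H i)) (Gf Nt)) -
            MvPowerSeries.X i := by ring
      rw [h4, h2, sub_self]
    exact tT_mul_cancel (sub_eq_zero.mp h3)
  · intro h i
    rw [show (fun j => MvPowerSeries.X j + tT * Nt j) = Gf Nt from rfl, expand i, ← h i]
    ring

lemma clause2_iff (hH : vordGE 1 H) :
    (∀ i, sub (MvPowerSeries.X i + tT * Nt i)
        (fun j => MvPowerSeries.X j - tT * inclZ (H j)) = MvPowerSeries.X i)
    ↔ (∀ i, sub (Nt i) (Ff H) = inclZ (H i)) := by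
  have hF : vordGE 1 (Ff H) := vord_Ff hH
  have expand : ∀ i, sub (MvPowerSeries.X i + tT * Nt i) (Ff H) =
      (MvPowerSeries.X i - tT * inclZ (H i)) + tT * sub (Nt i) (Ff H) := by
    intro i
    rw [sub_add hF, sub_mul' hF, sub_tT hF, sub_X_apply hF]
    rfl
  constructor
  · intro h i
    have h2 := h i
    rw [show (fun j => MvPowerSeries.X j - tT * inclZ (H j)) = Ff H from rfl, expand i] at h2
    have h3 : tT * sub (Nt i) (Ff H) - tT * inclZ (H i) = 0 := by
      have h4 : tT * sub (Nt i) (Ff H) - tT * inclZ (H i) =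
          (MvPowerSeries.X i - tT * inclZ (H i) + tT * sub (Nt i) (Ff H)) -
            MvPowerSeries.X i := by ring
      rw [h4, h2, sub_self]
    exact tT_mul_cancel (sub_eq_zero.mp h3)
  · intro h i
    rw [show (fun j => MvPowerSeries.X j - tT * inclZ (H j)) = Ff H from rfl, expand i, h i]
    ring

lemma init_of_star (hNt : vordGE 1 Nt)
    (star : ∀ i, Nt i = sub (inclZ (H i)) (Gf Nt)) :
    ∀ i, evalT0 (Nt i) = H i := by
  intro i
  rw [star i]
  exact evalT0_sub_Gf hNt (H i)

lemma pde_of_star (hNt : vordGE 1 Nt)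
    (star : ∀ i, Nt i = sub (inclZ (H i)) (Gf Nt)) :
    ∀ i, dt (Nt i) = ∑ j, pd j (Nt i) * Nt j := by
  set E : Fin n → PSZT n := fun i => dt (Nt i) - ∑ j, pd j (Nt i) * Nt j with hE
  have hEe : ∀ i, E i = tT * ∑ k, Amat H Nt i k * E k := by
    intro i
    have e1 : dt (Nt i) = (∑ k, Amat H Nt i k * Nt k) +
        tT * (∑ k, Amat H Nt i k * dt (Nt k)) := by
      conv_lhs => rw [star i]
      exact dt_subHZ hNt i
    have e2 : (∑ j, pd j (Nt i) * Nt j) = (∑ k, Amat H Nt i k * Nt k) +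
        tT * (∑ k, Amat H Nt i k * (∑ j, pd j (Nt k) * Nt j)) := by
      conv_lhs => rw [star i]
      exact pdsum_subHZ hNt i
    have e3 : (∑ k, Amat H Nt i k * E k) =
        (∑ k, Amat H Nt i k * dt (Nt k)) -
          (∑ k, Amat H Nt i k * (∑ j, pd j (Nt k) * Nt j)) := by
      rw [← Finset.sum_sub_distrib]
      apply Finset.sum_congr rfl
      intro k _
      show Amat H Nt i k * (dt (Nt k) - ∑ j, pd j (Nt k) * Nt j) = _
      ring
    show dt (Nt i) - (∑ j, pd j (Nt i) * Nt j) = _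
    rw [e1, e2, e3]
    ring
  have hz := shift_engine E (Amat H Nt) hEe
  intro i
  have h0 : dt (Nt i) - ∑ j, pd j (Nt i) * Nt j = 0 := hz i
  exact sub_eq_zero.mp h0

lemma star_of_pde (hNt : vordGE 1 Nt)
    (pde : ∀ i, dt (Nt i) = ∑ j, pd j (Nt i) * Nt j)
    (hinit : ∀ i, evalT0 (Nt i) = H i) :
    ∀ i, Nt i = sub (inclZ (H i)) (Gf Nt) := by
  set P : Fin n → PSZT n := fun i => sub (inclZ (H i)) (Gf Nt) - Nt i with hP
  have hdtP : ∀ i, dt (P i) = ∑ j, ((0 : PSZT n) * P j + Nt j * pd j (P i)) := by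
    intro i
    have e1 : dt (sub (inclZ (H i)) (Gf Nt)) = (∑ k, Amat H Nt i k * Nt k) +
        tT * (∑ k, Amat H Nt i k * (∑ j, pd j (Nt k) * Nt j)) := by
      rw [dt_subHZ hNt i]
      congr 2
      apply Finset.sum_congr rfl
      intro k _
      rw [pde k]
    have e2 := pdsum_subHZ (H := H) hNt i
    have l3 : (∑ j, ((0 : PSZT n) * P j + Nt j * pd j (P i))) =
        (∑ j, pd j (sub (inclZ (H i)) (Gf Nt)) * Nt j) - ∑ j, pd j (Nt i) * Nt j := by
      rw [← Finset.sum_sub_distrib]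
      apply Finset.sum_congr rfl
      intro j _
      show (0 : PSZT n) * P j + Nt j * pd j (sub (inclZ (H i)) (Gf Nt) - Nt i) = _
      rw [pd_sub']
      ring
    show dt (sub (inclZ (H i)) (Gf Nt) - Nt i) = _
    rw [dt_sub, l3, e1, ← e2, pde i]
  have h0 : ∀ i, evalT0 (P i) = 0 := by
    intro i
    show evalT0 (sub (inclZ (H i)) (Gf Nt) - Nt i) = 0
    rw [map_sub, evalT0_sub_Gf hNt, hinit i, sub_self]
  have hz := ode_engine P (fun _ _ => 0) (fun _ j => Nt j) hdtP h0
  intro i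
  exact (sub_eq_zero.mp (hz i)).symm

lemma starstar_of_pde (hH : vordGE 1 H)
    (pde : ∀ i, dt (Nt i) = ∑ j, pd j (Nt i) * Nt j)
    (hinit : ∀ i, evalT0 (Nt i) = H i) :
    ∀ i, sub (Nt i) (Ff H) = inclZ (H i) := by
  have hF : vordGE 1 (Ff H) := vord_Ff hH
  set Q : Fin n → PSZT n := fun i => sub (Nt i) (Ff H) - inclZ (H i) with hQ
  have dtF : ∀ k, dt (Ff H k) = -(inclZ (H k)) := by
    intro k
    show dt (MvPowerSeries.X k - tT * inclZ (H k)) = _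
    rw [dt_sub, dt_X, dt_mul, dt_tT, dt_inclZ, mul_zero, add_zero, one_mul, zero_sub]
  have hdtQ : ∀ i, dt (Q i) =
      ∑ k, (sub (pd k (Nt i)) (Ff H) * Q k + (0 : PSZT n) * pd k (Q i)) := by
    intro i
    have c1 : dt (sub (Nt i) (Ff H)) = sub (dt (Nt i)) (Ff H) +
        ∑ k, sub (pd k (Nt i)) (Ff H) * dt (Ff H k) := dt_chain hF _
    have c2 : sub (dt (Nt i)) (Ff H) =
        ∑ k, sub (pd k (Nt i)) (Ff H) * sub (Nt k) (Ff H) := by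
      rw [pde i, sub_finsum hF]
      apply Finset.sum_congr rfl
      intro k _
      rw [sub_mul' hF]
    show dt (sub (Nt i) (Ff H) - inclZ (H i)) = _
    rw [dt_sub, dt_inclZ, sub_zero, c1, c2]
    rw [← Finset.sum_add_distrib]
    apply Finset.sum_congr rfl
    intro k _
    rw [dtF k]
    show sub (pd k (Nt i)) (Ff H) * sub (Nt k) (Ff H) +
        sub (pd k (Nt i)) (Ff H) * -(inclZ (H k)) =
      sub (pd k (Nt i)) (Ff H) * (sub (Nt k) (Ff H) - inclZ (H k)) +
        (0 : PSZT n) * pd k (Q i)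
    ring
  have h0 : ∀ i, evalT0 (Q i) = 0 := by
    intro i
    show evalT0 (sub (Nt i) (Ff H) - inclZ (H i)) = 0
    rw [map_sub, evalT0_sub_Ff hH, hinit i, sub_id, evalT0_inclZ, sub_self]
  have hz := ode_engine Q (fun i k => sub (pd k (Nt i)) (Ff H)) (fun _ _ => 0) hdtQ h0
  intro i
  exact sub_eq_zero.mp (hz i)

lemma pde_unique (M M' : Fin n → PSZT n)
    (pdeM : ∀ i, dt (M i) = ∑ j, pd j (M i) * M j)
    (pdeM' : ∀ i, dt (M' i) = ∑ j, pd j (M' i) * M' j)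
    (initM : ∀ i, evalT0 (M i) = H i)
    (initM' : ∀ i, evalT0 (M' i) = H i) : M = M' := by
  set E : Fin n → PSZT n := fun i => M i - M' i with hEd
  have hdt : ∀ i, dt (E i) = ∑ j, (pd j (M i) * E j + M' j * pd j (E i)) := by
    intro i
    show dt (M i - M' i) = _
    rw [dt_sub, pdeM i, pdeM' i, ← Finset.sum_sub_distrib]
    apply Finset.sum_congr rfl
    intro j _
    show pd j (M i) * M j - pd j (M' i) * M' j =
      pd j (M i) * (M j - M' j) + M' j * pd j (M i - M' i)
    rw [pd_sub']
    ring
  have h0 : ∀ i, evalT0 (E i) = 0 := by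
    intro i
    show evalT0 (M i - M' i) = 0
    rw [map_sub, initM i, initM' i, sub_self]
  have hz := ode_engine E (fun i j => pd j (M i)) (fun _ j => M' j) hdt h0
  funext i
  exact sub_eq_zero.mp (hz i)

end S4
end Stage9

/-- `G_t(z) = z + tN_t(z)` is the formal inverse of `F_t(z) = z - tH(z)` iff
`N_t` is the unique power series solution of the Cauchy problem
`∂N_t/∂t = JN_t·N_t`, `N_{t=0} = H`. -/
theorem stmt4 {n : ℕ} (H : Fin n → MvPowerSeries (Fin n) ℂ) (hH : vordGE 1 H)
    (Nt : Fin n → PSZT n) (hNt : vordGE 1 Nt) :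
    IsInv (fun i => MvPowerSeries.X i - tT * inclZ (H i))
        (fun i => MvPowerSeries.X i + tT * Nt i) ↔
      ((∀ i, dt (Nt i) = (jac Nt).mulVec Nt i) ∧ (∀ i, evalT0 (Nt i) = H i) ∧
        ∀ M : Fin n → PSZT n,
          ((∀ i, dt (M i) = (jac M).mulVec M i) ∧ (∀ i, evalT0 (M i) = H i)) → M = Nt) := by
  constructor
  · rintro ⟨h1, h2⟩
    have star : ∀ i, Nt i = sub (inclZ (H i)) (S4.Gf Nt) := (S4.clause1_iff hNt).mp h1
    have pde := S4.pde_of_star hNt star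
    have hinit := S4.init_of_star hNt star
    refine ⟨?_, hinit, ?_⟩
    · intro i
      rw [S4.mulVec_eq]
      exact pde i
    · rintro M ⟨pdeM, initM⟩
      refine S4.pde_unique M Nt ?_ pde initM hinit
      intro i
      rw [← S4.mulVec_eq]
      exact pdeM i
  · rintro ⟨hpde, hinit, -⟩
    have pde : ∀ i, dt (Nt i) = ∑ j, pd j (Nt i) * Nt j := by
      intro i
      rw [← S4.mulVec_eq]
      exact hpde i
    have star := S4.star_of_pde hNt pde hinit
    have starstar := S4.starstar_of_pde hH pde hinit
    exact ⟨(S4.clause1_iff hNt).mpr star, (S4.clause2_iff hH).mpr starstar⟩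
end
end

section
/- Let H ∈ ℂ[[z]]^{×n} with o(H) ≥ 2, let F_t(z) = z − tH(z) with formal inverse G_t(z) = z + tN_t(z), where N_t ∈ ℂ[t][[z]]^{×n}. Then for any s ∈ ℂ, the formal compositional inverse of U_{s,t}(z) = z − sN_t(z) is V_{s,t}(z) = z + sN_{t+s}(z), where N_{t+s} denotes the result of substituting t+s for t in N_t. Moreover U_{s,t}(z) = (F_{t+s} ∘ G_t)(z) and V_{s,t}(z) = (F_t ∘ G_{s+t})(z). -/
/-
Common setup: `ℂ[[z]]` is `MvPowerSeries (Fin n) ℂ`; `ℂ[[z,t]]` is realized as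
`MvPowerSeries (Fin n) (PowerSeries ℂ)` (power series in `z` with coefficients in `ℂ[[t]]`),
and `ℂ[t][[z]]` as `MvPowerSeries (Fin n) (Polynomial ℂ)`.  Substitution, partial
derivatives, Jacobian matrices, order and compositional inverses are defined below.
-/

noncomputable section

namespace Stmt10Aux
open MvPowerSeries Finset

variable {n : ℕ} {R : Type*} [CommRing R]

def deg (d : Fin n →₀ ℕ) : ℕ := d.sum fun _ e => e

lemma apply_le_deg (d : Fin n →₀ ℕ) (i : Fin n) : d i ≤ deg d := by
  by_cases h : i ∈ d.support
  · exact Finset.single_le_sum (f := fun i => d i) (fun _ _ => Nat.zero_le _) h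
  · simp [Finsupp.notMem_support_iff.mp h]

lemma deg_add (u v : Fin n →₀ ℕ) : deg (u + v) = deg u + deg v :=
  Finsupp.sum_add_index' (fun _ => rfl) (fun _ _ _ => rfl)

lemma deg_eq_sum (d : Fin n →₀ ℕ) : deg d = ∑ i, d i :=
  Finsupp.sum_fintype d _ (fun _ => rfl)

def Bset (n k : ℕ) : Finset (Fin n →₀ ℕ) :=
  Finset.Icc 0 (Finsupp.equivFunOnFinite.symm fun _ => k)

lemma mem_Bset {k : ℕ} {d : Fin n →₀ ℕ} : d ∈ Bset n k ↔ ∀ i, d i ≤ k := by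
  simp only [Bset, Finset.mem_Icc, Finsupp.le_def]
  constructor
  · exact fun h i => h.2 i
  · exact fun h => ⟨fun i => Nat.zero_le _, fun i => h i⟩

lemma mem_Bset_of_deg_le {k : ℕ} {d : Fin n →₀ ℕ} (h : deg d ≤ k) : d ∈ Bset n k :=
  mem_Bset.mpr fun i => le_trans (apply_le_deg d i) h

lemma deg_le_of_mem_Bset {k : ℕ} {d : Fin n →₀ ℕ} (h : d ∈ Bset n k) : deg d ≤ n * k := by
  rw [deg_eq_sum]
  calc ∑ i, d i ≤ ∑ _i : Fin n, k := Finset.sum_le_sum fun i _ => mem_Bset.mp h i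
  _ = n * k := by simp [Finset.sum_const, mul_comm]

def pp (a : Fin n → MvPowerSeries (Fin n) R) (d : Fin n →₀ ℕ) : MvPowerSeries (Fin n) R :=
  ∏ i, a i ^ d i

lemma pp_add (a : Fin n → MvPowerSeries (Fin n) R) (u v : Fin n →₀ ℕ) :
    pp a (u + v) = pp a u * pp a v := by
  rw [pp, pp, pp, ← Finset.prod_mul_distrib]
  exact Finset.prod_congr rfl fun i _ => by rw [Finsupp.add_apply, pow_add]

lemma pp_zero (a : Fin n → MvPowerSeries (Fin n) R) : pp a 0 = 1 := by
  simp [pp]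

lemma ordGE_mono {k l : ℕ} (h : l ≤ k) {f : MvPowerSeries (Fin n) R} (hf : ordGE k f) :
    ordGE l f := fun d hd => hf d (lt_of_lt_of_le hd h)

lemma ordGE_mul {k l : ℕ} {f g : MvPowerSeries (Fin n) R} (hf : ordGE k f) (hg : ordGE l g) :
    ordGE (k + l) (f * g) := by
  intro d hd
  rw [MvPowerSeries.coeff_mul]
  apply Finset.sum_eq_zero
  intro p hp
  rw [Finset.HasAntidiagonal.mem_antidiagonal] at hp
  have hlt : deg p.1 + deg p.2 < k + l := by rw [← deg_add, hp]; exact hd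
  rcases lt_or_ge (deg p.1) k with h1 | h1
  · rw [hf _ h1, zero_mul]
  · rw [hg _ (show deg p.2 < l by omega), mul_zero]

lemma ordGE_pow {k : ℕ} {f : MvPowerSeries (Fin n) R} (hf : ordGE k f) (j : ℕ) :
    ordGE (j * k) (f ^ j) := by
  induction j with
  | zero => exact fun d hd => absurd hd (by omega)
  | succ j ih =>
    have : (j + 1) * k = j * k + k := by ring
    rw [this, pow_succ]
    exact ordGE_mul ih hf

lemma ordGE_prod {ι : Type*} (s : Finset ι) (F : ι → MvPowerSeries (Fin n) R) (K : ι → ℕ)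
    (h : ∀ i ∈ s, ordGE (K i) (F i)) : ordGE (∑ i ∈ s, K i) (∏ i ∈ s, F i) := by
  classical
  induction s using Finset.induction_on with
  | empty => exact fun d hd => absurd hd (by simp)
  | @insert x s' hx ih =>
    rw [Finset.sum_insert hx, Finset.prod_insert hx]
    exact ordGE_mul (h x (Finset.mem_insert_self _ _))
      (ih fun i hi => h i (Finset.mem_insert_of_mem hi))

lemma ordGE_pp {a : Fin n → MvPowerSeries (Fin n) R} (ha : vordGE 1 a) (d : Fin n →₀ ℕ) :
    ordGE (deg d) (pp a d) := by
  have := ordGE_prod Finset.univ (fun i => a i ^ d i) (fun i => d i)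
    (fun i _ => by simpa using ordGE_pow (ha i) (d i))
  rwa [← deg_eq_sum] at this

lemma coeff_pp_eq_zero {a : Fin n → MvPowerSeries (Fin n) R} (ha : vordGE 1 a)
    {m d : Fin n →₀ ℕ} (h : deg m < deg d) : MvPowerSeries.coeff (R := R) m (pp a d) = 0 :=
  ordGE_pp ha d m h

lemma coeff_sub (f : MvPowerSeries (Fin n) R) {a : Fin n → MvPowerSeries (Fin n) R}
    (ha : vordGE 1 a) (m : Fin n →₀ ℕ) (s : Finset (Fin n →₀ ℕ))
    (hs : ∀ d : Fin n →₀ ℕ, deg d ≤ deg m → d ∈ s) :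
    MvPowerSeries.coeff (R := R) m (sub f a) =
      ∑ d ∈ s, MvPowerSeries.coeff (R := R) d f * MvPowerSeries.coeff (R := R) m (pp a d) := by
  have h0 : MvPowerSeries.coeff (R := R) m (sub f a) = ∑ᶠ d : Fin n →₀ ℕ,
      MvPowerSeries.coeff (R := R) d f * MvPowerSeries.coeff (R := R) m (pp a d) := rfl
  rw [h0]
  apply finsum_eq_sum_of_support_subset
  intro d hd
  simp only [Function.mem_support] at hd
  by_contra hds
  have hdm : ¬ (deg d ≤ deg m) := fun h => hds (hs d h)
  exact hd (by rw [coeff_pp_eq_zero ha (by omega), mul_zero])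

lemma sub_add' (f g : MvPowerSeries (Fin n) R) {a : Fin n → MvPowerSeries (Fin n) R}
    (ha : vordGE 1 a) : sub (f + g) a = sub f a + sub g a := by
  ext m
  rw [map_add, coeff_sub _ ha m (Bset n (deg m)) (fun d => mem_Bset_of_deg_le),
    coeff_sub f ha m (Bset n (deg m)) (fun d => mem_Bset_of_deg_le),
    coeff_sub g ha m (Bset n (deg m)) (fun d => mem_Bset_of_deg_le),
    ← Finset.sum_add_distrib]
  exact Finset.sum_congr rfl fun d _ => by rw [map_add, add_mul]

lemma sub_zero' {a : Fin n → MvPowerSeries (Fin n) R} (ha : vordGE 1 a) :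
    sub (0 : MvPowerSeries (Fin n) R) a = 0 := by
  ext m
  rw [coeff_sub _ ha m (Bset n (deg m)) (fun d => mem_Bset_of_deg_le)]
  simp

lemma sub_one' {a : Fin n → MvPowerSeries (Fin n) R} (ha : vordGE 1 a) :
    sub (1 : MvPowerSeries (Fin n) R) a = 1 := by
  ext m
  rw [coeff_sub _ ha m (Bset n (deg m)) (fun d => mem_Bset_of_deg_le)]
  rw [Finset.sum_eq_single_of_mem 0 (mem_Bset_of_deg_le (by simp [deg]))]
  · rw [pp_zero]; simp [MvPowerSeries.coeff_one]
  · intro d _ hd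
    rw [MvPowerSeries.coeff_one, if_neg hd, zero_mul]

lemma sub_C_mul (r : R) (f : MvPowerSeries (Fin n) R) {a : Fin n → MvPowerSeries (Fin n) R}
    (ha : vordGE 1 a) :
    sub (MvPowerSeries.C (σ := Fin n) (R := R) r * f) a = MvPowerSeries.C (σ := Fin n) (R := R) r * sub f a := by
  ext m
  rw [MvPowerSeries.coeff_C_mul,
    coeff_sub _ ha m (Bset n (deg m)) (fun d => mem_Bset_of_deg_le),
    coeff_sub f ha m (Bset n (deg m)) (fun d => mem_Bset_of_deg_le), Finset.mul_sum]
  exact Finset.sum_congr rfl fun d _ => by rw [MvPowerSeries.coeff_C_mul, mul_assoc]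

lemma sub_X' (i : Fin n) {a : Fin n → MvPowerSeries (Fin n) R} (ha : vordGE 1 a) :
    sub (MvPowerSeries.X i) a = a i := by
  ext m
  rw [coeff_sub _ ha m (insert (Finsupp.single i 1) (Bset n (deg m)))
    (fun d hd => Finset.mem_insert_of_mem (mem_Bset_of_deg_le hd))]
  rw [Finset.sum_eq_single_of_mem (Finsupp.single i 1) (Finset.mem_insert_self _ _)]
  · rw [MvPowerSeries.coeff_X, if_pos rfl, one_mul]
    congr 1
    rw [pp, Finset.prod_eq_single i (fun j _ hj => by
      rw [Finsupp.single_apply, if_neg (fun h => hj h.symm), pow_zero])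
      (fun h => absurd (Finset.mem_univ i) h)]
    rw [Finsupp.single_apply, if_pos rfl, pow_one]
  · intro d _ hd
    rw [MvPowerSeries.coeff_X, if_neg hd, zero_mul]

lemma sub_mul' (f g : MvPowerSeries (Fin n) R) {a : Fin n → MvPowerSeries (Fin n) R}
    (ha : vordGE 1 a) : sub (f * g) a = sub f a * sub g a := by
  ext m
  set k := deg m with hk
  set B : Finset (Fin n →₀ ℕ) := Bset n k with hB
  have hBmem : ∀ d : Fin n →₀ ℕ, deg d ≤ deg m → d ∈ B := fun d => mem_Bset_of_deg_le
  set F : (Fin n →₀ ℕ) × (Fin n →₀ ℕ) → R := fun p =>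
    MvPowerSeries.coeff (R := R) p.1 f * MvPowerSeries.coeff (R := R) p.2 g *
      MvPowerSeries.coeff (R := R) m (pp a (p.1 + p.2)) with hF
  have lhs1 : MvPowerSeries.coeff (R := R) m (sub (f * g) a) = ∑ d ∈ B, ∑ p ∈ antidiagonal d, F p := by
    rw [coeff_sub _ ha m B hBmem]
    refine Finset.sum_congr rfl fun d hd => ?_
    rw [MvPowerSeries.coeff_mul, Finset.sum_mul]
    refine Finset.sum_congr rfl fun p hp => ?_
    rw [Finset.HasAntidiagonal.mem_antidiagonal] at hp
    rw [hF]; dsimp only; rw [hp]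
  have hdisj : (↑B : Set (Fin n →₀ ℕ)).PairwiseDisjoint antidiagonal := by
    intro d1 _ d2 _ hne
    simp only [Function.onFun]
    rw [Finset.disjoint_left]
    intro p hp1 hp2
    rw [Finset.HasAntidiagonal.mem_antidiagonal] at hp1 hp2
    exact hne (hp1 ▸ hp2)
  have lhs2 : ∑ d ∈ B, ∑ p ∈ antidiagonal d, F p = ∑ p ∈ B.biUnion antidiagonal, F p :=
    (Finset.sum_biUnion hdisj).symm
  have hsub : B.biUnion antidiagonal ⊆ B ×ˢ B := by
    intro p hp
    rw [Finset.mem_biUnion] at hp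
    obtain ⟨d, hd, hpd⟩ := hp
    rw [Finset.HasAntidiagonal.mem_antidiagonal] at hpd
    rw [Finset.mem_product]
    constructor
    · exact mem_Bset.mpr fun i => le_trans (by
        have : p.1 i ≤ p.1 i + p.2 i := Nat.le_add_right _ _
        calc p.1 i ≤ (p.1 + p.2) i := by simpa using this
          _ = d i := by rw [hpd]) (mem_Bset.mp hd i)
    · exact mem_Bset.mpr fun i => le_trans (by
        have : p.2 i ≤ p.1 i + p.2 i := Nat.le_add_left _ _
        calc p.2 i ≤ (p.1 + p.2) i := by simpa using this
          _ = d i := by rw [hpd]) (mem_Bset.mp hd i)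
  have lhs3 : ∑ p ∈ B.biUnion antidiagonal, F p = ∑ p ∈ B ×ˢ B, F p := by
    apply Finset.sum_subset hsub
    intro p hpB hpn
    have hsumn : p.1 + p.2 ∉ B := by
      intro hmem
      exact hpn (Finset.mem_biUnion.mpr ⟨p.1 + p.2, hmem, Finset.HasAntidiagonal.mem_antidiagonal.mpr rfl⟩)
    have : deg m < deg (p.1 + p.2) := by
      by_contra hle
      exact hsumn (hBmem _ (by omega))
    rw [hF]; dsimp only; rw [coeff_pp_eq_zero ha this, mul_zero]
  have rhs1 : MvPowerSeries.coeff (R := R) m (sub f a * sub g a) = ∑ p ∈ B ×ˢ B, F p := by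
    rw [MvPowerSeries.coeff_mul]
    have expand : ∀ p ∈ antidiagonal m,
        MvPowerSeries.coeff (R := R) p.1 (sub f a) * MvPowerSeries.coeff (R := R) p.2 (sub g a) =
        ∑ u ∈ B, ∑ v ∈ B, (MvPowerSeries.coeff (R := R) u f * MvPowerSeries.coeff (R := R) p.1 (pp a u)) *
          (MvPowerSeries.coeff (R := R) v g * MvPowerSeries.coeff (R := R) p.2 (pp a v)) := by
      intro p hp
      rw [Finset.HasAntidiagonal.mem_antidiagonal] at hp
      have h1 : deg p.1 ≤ deg m := by rw [← hp, deg_add]; omega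
      have h2 : deg p.2 ≤ deg m := by rw [← hp, deg_add]; omega
      rw [coeff_sub f ha p.1 B (fun d hd => hBmem d (le_trans hd h1)),
        coeff_sub g ha p.2 B (fun d hd => hBmem d (le_trans hd h2)),
        Finset.sum_mul_sum]
    rw [Finset.sum_congr rfl expand]
    calc ∑ p ∈ antidiagonal m, ∑ u ∈ B, ∑ v ∈ B,
          (MvPowerSeries.coeff (R := R) u f * MvPowerSeries.coeff (R := R) p.1 (pp a u)) *
            (MvPowerSeries.coeff (R := R) v g * MvPowerSeries.coeff (R := R) p.2 (pp a v))
        = ∑ u ∈ B, ∑ p ∈ antidiagonal m, ∑ v ∈ B,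
          (MvPowerSeries.coeff (R := R) u f * MvPowerSeries.coeff (R := R) p.1 (pp a u)) *
            (MvPowerSeries.coeff (R := R) v g * MvPowerSeries.coeff (R := R) p.2 (pp a v)) := Finset.sum_comm
      _ = ∑ u ∈ B, ∑ v ∈ B, ∑ p ∈ antidiagonal m,
          (MvPowerSeries.coeff (R := R) u f * MvPowerSeries.coeff (R := R) p.1 (pp a u)) *
            (MvPowerSeries.coeff (R := R) v g * MvPowerSeries.coeff (R := R) p.2 (pp a v)) :=
          Finset.sum_congr rfl fun u _ => Finset.sum_comm
      _ = ∑ p ∈ B ×ˢ B, F p := by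
          rw [Finset.sum_product]
          refine Finset.sum_congr rfl fun u hu => Finset.sum_congr rfl fun v hv => ?_
          rw [hF]; dsimp only
          rw [pp_add, MvPowerSeries.coeff_mul, Finset.mul_sum]
          exact Finset.sum_congr rfl fun p _ => by ring
  rw [lhs1, lhs2, lhs3, rhs1]

def subHom (a : Fin n → MvPowerSeries (Fin n) R) (ha : vordGE 1 a) :
    MvPowerSeries (Fin n) R →+* MvPowerSeries (Fin n) R where
  toFun f := sub f a
  map_one' := sub_one' ha
  map_mul' f g := sub_mul' f g ha
  map_zero' := sub_zero' ha
  map_add' f g := sub_add' f g ha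

@[simp] lemma subHom_apply {a : Fin n → MvPowerSeries (Fin n) R} (ha : vordGE 1 a)
    (f : MvPowerSeries (Fin n) R) : subHom a ha f = sub f a := rfl

lemma sub_sub_eq (f g : MvPowerSeries (Fin n) R) {a : Fin n → MvPowerSeries (Fin n) R}
    (ha : vordGE 1 a) : sub (f - g) a = sub f a - sub g a :=
  map_sub (subHom a ha) f g

lemma sub_pp {b : Fin n → MvPowerSeries (Fin n) R} (hb : vordGE 1 b)
    (a : Fin n → MvPowerSeries (Fin n) R) (d : Fin n →₀ ℕ) :
    sub (pp a d) b = pp (fun i => sub (a i) b) d := by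
  show subHom b hb (pp a d) = _
  rw [pp, map_prod]
  exact Finset.prod_congr rfl fun i _ => by rw [map_pow]; rfl

lemma deg_zero : deg (0 : Fin n →₀ ℕ) = 0 := rfl

lemma ordGE_comp {g : MvPowerSeries (Fin n) R} (hg : ordGE 1 g)
    {b : Fin n → MvPowerSeries (Fin n) R} (hb : vordGE 1 b) : ordGE 1 (sub g b) := by
  intro m hm
  rw [coeff_sub g hb m (Bset n (deg m)) (fun d => mem_Bset_of_deg_le)]
  apply Finset.sum_eq_zero
  intro d hd
  have hdm : deg m = 0 := Nat.lt_one_iff.mp hm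
  have : ∀ i, d i = 0 := fun i => Nat.le_zero.mp (hdm ▸ mem_Bset.mp hd i)
  have hd0 : d = 0 := Finsupp.ext this
  rw [hd0, hg 0 (by simp), zero_mul]

lemma vordGE_comp {a b : Fin n → MvPowerSeries (Fin n) R} (ha : vordGE 1 a)
    (hb : vordGE 1 b) : vordGE 1 (fun i => sub (a i) b) :=
  fun i => ordGE_comp (ha i) hb

lemma sub_assoc (f : MvPowerSeries (Fin n) R) {a b : Fin n → MvPowerSeries (Fin n) R}
    (ha : vordGE 1 a) (hb : vordGE 1 b) :
    sub (sub f a) b = sub f (fun i => sub (a i) b) := by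
  have ha' : vordGE 1 (fun i => sub (a i) b) := vordGE_comp ha hb
  ext m
  set K := deg m with hK
  set K2 := n * K + K with hK2
  rw [coeff_sub _ hb m (Bset n K) (fun d => mem_Bset_of_deg_le),
    coeff_sub f ha' m (Bset n K2) (fun d hd => mem_Bset_of_deg_le (by omega))]
  have step1 : ∀ e ∈ Bset n K, MvPowerSeries.coeff (R := R) e (sub f a) =
      ∑ d ∈ Bset n K2, MvPowerSeries.coeff (R := R) d f * MvPowerSeries.coeff (R := R) e (pp a d) := by
    intro e he
    refine coeff_sub f ha e (Bset n K2) (fun d hd => mem_Bset_of_deg_le ?_)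
    have h2 : deg e ≤ n * K := deg_le_of_mem_Bset he
    omega
  calc ∑ e ∈ Bset n K, MvPowerSeries.coeff (R := R) e (sub f a) * MvPowerSeries.coeff (R := R) m (pp b e)
      = ∑ e ∈ Bset n K, ∑ d ∈ Bset n K2, MvPowerSeries.coeff (R := R) d f *
          MvPowerSeries.coeff (R := R) e (pp a d) * MvPowerSeries.coeff (R := R) m (pp b e) := by
        refine Finset.sum_congr rfl fun e he => ?_
        rw [step1 e he, Finset.sum_mul]
    _ = ∑ d ∈ Bset n K2, ∑ e ∈ Bset n K, MvPowerSeries.coeff (R := R) d f *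
          MvPowerSeries.coeff (R := R) e (pp a d) * MvPowerSeries.coeff (R := R) m (pp b e) :=
        Finset.sum_comm
    _ = ∑ d ∈ Bset n K2, MvPowerSeries.coeff (R := R) d f *
          MvPowerSeries.coeff (R := R) m (pp (fun i => sub (a i) b) d) := by
        refine Finset.sum_congr rfl fun d _ => ?_
        rw [← sub_pp hb a d,
          coeff_sub (pp a d) hb m (Bset n K) (fun e he => mem_Bset_of_deg_le he),
          Finset.mul_sum]
        exact Finset.sum_congr rfl fun e _ => by ring

lemma map_sub_comm {S : Type*} [CommRing S] (φ : R →+* S) (f : MvPowerSeries (Fin n) R)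
    {a : Fin n → MvPowerSeries (Fin n) R} (ha : vordGE 1 a) :
    MvPowerSeries.map (σ := Fin n) φ (sub f a) =
      sub (MvPowerSeries.map (σ := Fin n) φ f) (fun i => MvPowerSeries.map (σ := Fin n) φ (a i)) := by
  have ha' : vordGE 1 (fun i => MvPowerSeries.map (σ := Fin n) φ (a i)) := fun i d hd => by
    rw [MvPowerSeries.coeff_map, ha i d hd, map_zero]
  ext m
  rw [MvPowerSeries.coeff_map, coeff_sub f ha m (Bset n (deg m)) (fun d => mem_Bset_of_deg_le),
    coeff_sub _ ha' m (Bset n (deg m)) (fun d => mem_Bset_of_deg_le), map_sum]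
  refine Finset.sum_congr rfl fun d _ => ?_
  rw [map_mul, MvPowerSeries.coeff_map]
  congr 1
  rw [← MvPowerSeries.coeff_map]
  congr 1
  rw [pp, pp, map_prod]
  exact Finset.prod_congr rfl fun i _ => by rw [map_pow]

lemma ordGE_X (i : Fin n) : ordGE 1 (MvPowerSeries.X i : MvPowerSeries (Fin n) R) := by
  intro d hd
  rw [MvPowerSeries.coeff_X]
  split
  · rename_i h
    subst h
    have h1 : ((Finsupp.single i 1).sum fun _ e => e) = 1 := by
      simp [Finsupp.sum_single_index]
    exact absurd hd (by omega)
  · rfl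

lemma ordGE_C_mul {k : ℕ} (r : R) {f : MvPowerSeries (Fin n) R} (hf : ordGE k f) :
    ordGE k (MvPowerSeries.C (σ := Fin n) (R := R) r * f) := fun d hd => by
  rw [MvPowerSeries.coeff_C_mul, hf d hd, mul_zero]

lemma ordGE_add {k : ℕ} {f g : MvPowerSeries (Fin n) R} (hf : ordGE k f) (hg : ordGE k g) :
    ordGE k (f + g) := fun d hd => by rw [map_add, hf d hd, hg d hd, add_zero]

lemma ordGE_sub {k : ℕ} {f g : MvPowerSeries (Fin n) R} (hf : ordGE k f) (hg : ordGE k g) :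
    ordGE k (f - g) := fun d hd => by rw [map_sub, hf d hd, hg d hd, sub_zero]

lemma ordGE_map {S : Type*} [CommRing S] (φ : R →+* S) {k : ℕ} {f : MvPowerSeries (Fin n) R}
    (hf : ordGE k f) : ordGE k (MvPowerSeries.map (σ := Fin n) φ f) := fun d hd => by
  rw [MvPowerSeries.coeff_map, hf d hd, map_zero]

lemma C_mul_cancel {n : ℕ} {r : Polynomial ℂ} (hr : r ≠ 0) {f g : PSZP n}
    (h : MvPowerSeries.C (σ := Fin n) (R := Polynomial ℂ) r * f =
         MvPowerSeries.C (σ := Fin n) (R := Polynomial ℂ) r * g) : f = g := by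
  apply MvPowerSeries.ext; intro m
  have := congrArg (MvPowerSeries.coeff (R := (Polynomial ℂ)) m) h
  rw [MvPowerSeries.coeff_C_mul, MvPowerSeries.coeff_C_mul] at this
  exact mul_left_cancel₀ hr this

lemma sub_affine_sub {n : ℕ} (i : Fin n) (c : Polynomial ℂ) (h : PSZP n) {G : Fin n → PSZP n}
    (hG : vordGE 1 G) :
    sub (MvPowerSeries.X i - MvPowerSeries.C (σ := Fin n) (R := Polynomial ℂ) c * h) G =
      G i - MvPowerSeries.C (σ := Fin n) (R := Polynomial ℂ) c * sub h G := by
  rw [sub_sub_eq _ _ hG, sub_X' i hG, sub_C_mul c h hG]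

lemma master {n : ℕ} (q c : Polynomial ℂ) (hq : q ≠ 0) (hqc : q + c ≠ 0)
    (Hp N N' : Fin n → PSZP n) (hHp : vordGE 1 Hp) (hN : vordGE 1 N) (hN' : vordGE 1 N')
    (h1 : ∀ i, sub (MvPowerSeries.X i - MvPowerSeries.C (σ := Fin n) (R := Polynomial ℂ) q * Hp i)
      (fun j => MvPowerSeries.X j + MvPowerSeries.C (σ := Fin n) (R := Polynomial ℂ) q * N j) =
      MvPowerSeries.X i)
    (h2 : ∀ i, sub (MvPowerSeries.X i + MvPowerSeries.C (σ := Fin n) (R := Polynomial ℂ) q * N i)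
      (fun j => MvPowerSeries.X j - MvPowerSeries.C (σ := Fin n) (R := Polynomial ℂ) q * Hp j) =
      MvPowerSeries.X i)
    (h1' : ∀ i, sub (MvPowerSeries.X i - (MvPowerSeries.C (σ := Fin n) (R := Polynomial ℂ) q +
        MvPowerSeries.C (σ := Fin n) (R := Polynomial ℂ) c) * Hp i)
      (fun j => MvPowerSeries.X j + (MvPowerSeries.C (σ := Fin n) (R := Polynomial ℂ) q +
        MvPowerSeries.C (σ := Fin n) (R := Polynomial ℂ) c) * N' j) =
      MvPowerSeries.X i)
    (h2' : ∀ i, sub (MvPowerSeries.X i + (MvPowerSeries.C (σ := Fin n) (R := Polynomial ℂ) q +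
        MvPowerSeries.C (σ := Fin n) (R := Polynomial ℂ) c) * N' i)
      (fun j => MvPowerSeries.X j - (MvPowerSeries.C (σ := Fin n) (R := Polynomial ℂ) q +
        MvPowerSeries.C (σ := Fin n) (R := Polynomial ℂ) c) * Hp j) =
      MvPowerSeries.X i) :
    IsInv
      (fun i => MvPowerSeries.X i - MvPowerSeries.C (σ := Fin n) (R := Polynomial ℂ) c * N i)
      (fun i => MvPowerSeries.X i + MvPowerSeries.C (σ := Fin n) (R := Polynomial ℂ) c * N' i) ∧
    (∀ i, MvPowerSeries.X i - MvPowerSeries.C (σ := Fin n) (R := Polynomial ℂ) c * N i =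
      sub (MvPowerSeries.X i - (MvPowerSeries.C (σ := Fin n) (R := Polynomial ℂ) q +
          MvPowerSeries.C (σ := Fin n) (R := Polynomial ℂ) c) * Hp i)
        (fun j => MvPowerSeries.X j + MvPowerSeries.C (σ := Fin n) (R := Polynomial ℂ) q * N j)) ∧
    (∀ i, MvPowerSeries.X i + MvPowerSeries.C (σ := Fin n) (R := Polynomial ℂ) c * N' i =
      sub (MvPowerSeries.X i - MvPowerSeries.C (σ := Fin n) (R := Polynomial ℂ) q * Hp i)
        (fun j => MvPowerSeries.X j + (MvPowerSeries.C (σ := Fin n) (R := Polynomial ℂ) q +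
          MvPowerSeries.C (σ := Fin n) (R := Polynomial ℂ) c) * N' j)) := by
  have hsum : MvPowerSeries.C (σ := Fin n) (R := Polynomial ℂ) q + MvPowerSeries.C (σ := Fin n) (R := Polynomial ℂ) c
      = MvPowerSeries.C (σ := Fin n) (R := Polynomial ℂ) (q + c) :=
    (map_add (MvPowerSeries.C (σ := Fin n) (R := Polynomial ℂ)) q c).symm
  simp only [hsum] at h1' h2'
  have hF : vordGE 1 (fun j => MvPowerSeries.X j -
      MvPowerSeries.C (σ := Fin n) (R := Polynomial ℂ) q * Hp j) :=
    fun j => ordGE_sub (ordGE_X j) (ordGE_C_mul _ (hHp j))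
  have hG : vordGE 1 (fun j => MvPowerSeries.X j +
      MvPowerSeries.C (σ := Fin n) (R := Polynomial ℂ) q * N j) :=
    fun j => ordGE_add (ordGE_X j) (ordGE_C_mul _ (hN j))
  have hF' : vordGE 1 (fun j => MvPowerSeries.X j -
      MvPowerSeries.C (σ := Fin n) (R := Polynomial ℂ) (q + c) * Hp j) :=
    fun j => ordGE_sub (ordGE_X j) (ordGE_C_mul _ (hHp j))
  have hG' : vordGE 1 (fun j => MvPowerSeries.X j +
      MvPowerSeries.C (σ := Fin n) (R := Polynomial ℂ) (q + c) * N' j) :=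
    fun j => ordGE_add (ordGE_X j) (ordGE_C_mul _ (hN' j))
  have hU : vordGE 1 (fun j => MvPowerSeries.X j -
      MvPowerSeries.C (σ := Fin n) (R := Polynomial ℂ) c * N j) :=
    fun j => ordGE_sub (ordGE_X j) (ordGE_C_mul _ (hN j))
  have hV : vordGE 1 (fun j => MvPowerSeries.X j +
      MvPowerSeries.C (σ := Fin n) (R := Polynomial ℂ) c * N' j) :=
    fun j => ordGE_add (ordGE_X j) (ordGE_C_mul _ (hN' j))
  have keyN : ∀ i, sub (Hp i)
      (fun j => MvPowerSeries.X j + MvPowerSeries.C (σ := Fin n) (R := Polynomial ℂ) q * N j) = N i := by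
    intro i
    apply C_mul_cancel hq
    have h := h1 i
    rw [sub_affine_sub i q (Hp i) hG] at h
    linear_combination -h
  have keyN' : ∀ i, sub (Hp i)
      (fun j => MvPowerSeries.X j + MvPowerSeries.C (σ := Fin n) (R := Polynomial ℂ) (q + c) * N' j)
      = N' i := by
    intro i
    apply C_mul_cancel hqc
    have h := h1' i
    rw [sub_affine_sub i (q + c) (Hp i) hG'] at h
    linear_combination -h
  have stmt2 : ∀ i, MvPowerSeries.X i - MvPowerSeries.C (σ := Fin n) (R := Polynomial ℂ) c * N i =
      sub (MvPowerSeries.X i - MvPowerSeries.C (σ := Fin n) (R := Polynomial ℂ) (q + c) * Hp i)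
        (fun j => MvPowerSeries.X j + MvPowerSeries.C (σ := Fin n) (R := Polynomial ℂ) q * N j) := by
    intro i
    rw [sub_affine_sub i (q + c) (Hp i) hG, keyN i]
    rw [← hsum]
    ring
  have stmt3 : ∀ i, MvPowerSeries.X i + MvPowerSeries.C (σ := Fin n) (R := Polynomial ℂ) c * N' i =
      sub (MvPowerSeries.X i - MvPowerSeries.C (σ := Fin n) (R := Polynomial ℂ) q * Hp i)
        (fun j => MvPowerSeries.X j + MvPowerSeries.C (σ := Fin n) (R := Polynomial ℂ) (q + c) * N' j) := by
    intro i
    rw [sub_affine_sub i q (Hp i) hG', keyN' i]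
    rw [← hsum]
    ring
  have comp1 : ∀ j, sub (MvPowerSeries.X j + MvPowerSeries.C (σ := Fin n) (R := Polynomial ℂ) q * N j)
      (fun k => MvPowerSeries.X k + MvPowerSeries.C (σ := Fin n) (R := Polynomial ℂ) c * N' k) =
      MvPowerSeries.X j + MvPowerSeries.C (σ := Fin n) (R := Polynomial ℂ) (q + c) * N' j := by
    intro j
    have hVe : (fun k => MvPowerSeries.X k + MvPowerSeries.C (σ := Fin n) (R := Polynomial ℂ) c * N' k) =
        fun k => sub (MvPowerSeries.X k - MvPowerSeries.C (σ := Fin n) (R := Polynomial ℂ) q * Hp k)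
          (fun j => MvPowerSeries.X j + MvPowerSeries.C (σ := Fin n) (R := Polynomial ℂ) (q + c) * N' j) :=
      funext fun k => stmt3 k
    rw [hVe, ← sub_assoc _ hF hG', h2 j]
    exact sub_X' j hG'
  have comp2 : ∀ j, sub (MvPowerSeries.X j + MvPowerSeries.C (σ := Fin n) (R := Polynomial ℂ) (q + c) * N' j)
      (fun k => MvPowerSeries.X k - MvPowerSeries.C (σ := Fin n) (R := Polynomial ℂ) c * N k) =
      MvPowerSeries.X j + MvPowerSeries.C (σ := Fin n) (R := Polynomial ℂ) q * N j := by
    intro j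
    have hUe : (fun k => MvPowerSeries.X k - MvPowerSeries.C (σ := Fin n) (R := Polynomial ℂ) c * N k) =
        fun k => sub (MvPowerSeries.X k - MvPowerSeries.C (σ := Fin n) (R := Polynomial ℂ) (q + c) * Hp k)
          (fun j => MvPowerSeries.X j + MvPowerSeries.C (σ := Fin n) (R := Polynomial ℂ) q * N j) :=
      funext fun k => stmt2 k
    rw [hUe, ← sub_assoc _ hF' hG, h2' j]
    exact sub_X' j hG
  refine ⟨⟨fun i => ?_, fun i => ?_⟩, fun i => by rw [hsum]; exact stmt2 i,
    fun i => by rw [hsum]; exact stmt3 i⟩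
  · show sub (MvPowerSeries.X i - MvPowerSeries.C (σ := Fin n) (R := Polynomial ℂ) c * N i)
      (fun k => MvPowerSeries.X k + MvPowerSeries.C (σ := Fin n) (R := Polynomial ℂ) c * N' k) =
      MvPowerSeries.X i
    rw [show MvPowerSeries.X i - MvPowerSeries.C (σ := Fin n) (R := Polynomial ℂ) c * N i =
      sub (MvPowerSeries.X i - MvPowerSeries.C (σ := Fin n) (R := Polynomial ℂ) (q + c) * Hp i)
        (fun j => MvPowerSeries.X j + MvPowerSeries.C (σ := Fin n) (R := Polynomial ℂ) q * N j)
      from stmt2 i]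
    rw [sub_assoc _ hG hV]
    have hfun : (fun j => sub ((fun k => MvPowerSeries.X k +
        MvPowerSeries.C (σ := Fin n) (R := Polynomial ℂ) q * N k) j)
        (fun k => MvPowerSeries.X k + MvPowerSeries.C (σ := Fin n) (R := Polynomial ℂ) c * N' k)) =
        fun j => MvPowerSeries.X j + MvPowerSeries.C (σ := Fin n) (R := Polynomial ℂ) (q + c) * N' j :=
      funext fun j => comp1 j
    rw [hfun]
    exact h1' i
  · show sub (MvPowerSeries.X i + MvPowerSeries.C (σ := Fin n) (R := Polynomial ℂ) c * N' i)
      (fun k => MvPowerSeries.X k - MvPowerSeries.C (σ := Fin n) (R := Polynomial ℂ) c * N k) =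
      MvPowerSeries.X i
    rw [show MvPowerSeries.X i + MvPowerSeries.C (σ := Fin n) (R := Polynomial ℂ) c * N' i =
      sub (MvPowerSeries.X i - MvPowerSeries.C (σ := Fin n) (R := Polynomial ℂ) q * Hp i)
        (fun j => MvPowerSeries.X j + MvPowerSeries.C (σ := Fin n) (R := Polynomial ℂ) (q + c) * N' j)
      from stmt3 i]
    rw [sub_assoc _ hG' hU]
    have hfun : (fun j => sub ((fun k => MvPowerSeries.X k +
        MvPowerSeries.C (σ := Fin n) (R := Polynomial ℂ) (q + c) * N' k) j)
        (fun k => MvPowerSeries.X k - MvPowerSeries.C (σ := Fin n) (R := Polynomial ℂ) c * N k)) =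
        fun j => MvPowerSeries.X j + MvPowerSeries.C (σ := Fin n) (R := Polynomial ℂ) q * N j :=
      funext fun j => comp2 j
    rw [hfun]
    exact h1 i

end Stmt10Aux

open Stmt10Aux

/-- for `o(H) ≥ 2` with `G_t(z) = z + tN_t(z)` (with `N_t ∈ ℂ[t][[z]]`) the
formal inverse of `F_t(z) = z - tH(z)`, and any `s ∈ ℂ`, the formal inverse of
`U_{s,t}(z) = z - sN_t(z)` is `V_{s,t}(z) = z + sN_{t+s}(z)`; moreover
`U_{s,t} = F_{t+s} ∘ G_t` and `V_{s,t} = F_t ∘ G_{s+t}`. -/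
theorem stmt10 {n : ℕ} (H : Fin n → MvPowerSeries (Fin n) ℂ) (hH : vordGE 2 H)
    (Nt : Fin n → PSZP n) (hNt : vordGE 1 Nt)
    (hinv : IsInv (fun i => MvPowerSeries.X i - tP * inclZP (H i))
                  (fun i => MvPowerSeries.X i + tP * Nt i))
    (s : ℂ) :
    IsInv
      (fun i => MvPowerSeries.X i -
        MvPowerSeries.C (σ := Fin n) (R := Polynomial ℂ) (Polynomial.C s) * Nt i)
      (fun i => MvPowerSeries.X i +
        MvPowerSeries.C (σ := Fin n) (R := Polynomial ℂ) (Polynomial.C s) * tshift s (Nt i)) ∧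
    (∀ i, MvPowerSeries.X i -
        MvPowerSeries.C (σ := Fin n) (R := Polynomial ℂ) (Polynomial.C s) * Nt i =
      sub (MvPowerSeries.X i -
          (tP + MvPowerSeries.C (σ := Fin n) (R := Polynomial ℂ) (Polynomial.C s)) * inclZP (H i))
        (fun j => MvPowerSeries.X j + tP * Nt j)) ∧
    (∀ i, MvPowerSeries.X i +
        MvPowerSeries.C (σ := Fin n) (R := Polynomial ℂ) (Polynomial.C s) * tshift s (Nt i) =
      sub (MvPowerSeries.X i - tP * inclZP (H i))
        (fun j => MvPowerSeries.X j +
          (tP + MvPowerSeries.C (σ := Fin n) (R := Polynomial ℂ) (Polynomial.C s)) *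
            tshift s (Nt j))) := by
  have hHp : vordGE 1 (fun i => inclZP (H i)) :=
    fun i => ordGE_map _ (ordGE_mono (by norm_num) (hH i))
  have hN' : vordGE 1 (fun i => tshift s (Nt i)) :=
    fun i => ordGE_map _ (hNt i)
  have hG : vordGE 1 (fun j => (MvPowerSeries.X j : PSZP n) + tP * Nt j) :=
    fun j => ordGE_add (ordGE_X j) (ordGE_C_mul _ (hNt j))
  have hF : vordGE 1 (fun j => (MvPowerSeries.X j : PSZP n) - tP * inclZP (H j)) :=
    fun j => ordGE_sub (ordGE_X j) (ordGE_C_mul _ (ordGE_map _ (ordGE_mono (by norm_num) (hH j))))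
  set ψ : Polynomial ℂ →+* Polynomial ℂ :=
    ((Polynomial.aeval (R := ℂ) (Polynomial.X + Polynomial.C s)).toRingHom) with hψ
  have hmapHp : ∀ i, MvPowerSeries.map (σ := Fin n) ψ (inclZP (H i)) = inclZP (H i) := by
    intro i
    apply MvPowerSeries.ext; intro m
    rw [MvPowerSeries.coeff_map]
    have hc : MvPowerSeries.coeff (R := (Polynomial ℂ)) m (inclZP (H i)) =
        Polynomial.C (MvPowerSeries.coeff (R := ℂ) m (H i)) :=
      MvPowerSeries.coeff_map (f := Polynomial.C) m (H i)
    rw [hc, hψ]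
    simp
  have hmaptP : MvPowerSeries.map (σ := Fin n) ψ tP =
      MvPowerSeries.C (σ := Fin n) (R := Polynomial ℂ) (Polynomial.X + Polynomial.C s) := by
    show MvPowerSeries.map (σ := Fin n) ψ
      (MvPowerSeries.C (σ := Fin n) (R := Polynomial ℂ) Polynomial.X) = _
    rw [MvPowerSeries.map_C]
    congr 1
    simp [hψ]
  have h1' : ∀ i, sub (MvPowerSeries.X i -
      (MvPowerSeries.C (σ := Fin n) (R := Polynomial ℂ) Polynomial.X +
       MvPowerSeries.C (σ := Fin n) (R := Polynomial ℂ) (Polynomial.C s)) * inclZP (H i))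
      (fun j => MvPowerSeries.X j +
        (MvPowerSeries.C (σ := Fin n) (R := Polynomial ℂ) Polynomial.X +
         MvPowerSeries.C (σ := Fin n) (R := Polynomial ℂ) (Polynomial.C s)) *
          tshift s (Nt j)) = MvPowerSeries.X i := by
    intro i
    have h := congrArg (MvPowerSeries.map (σ := Fin n) ψ) (hinv.1 i)
    rw [map_sub_comm ψ _ hG] at h
    simp only [map_sub, map_add, map_mul, MvPowerSeries.map_X, hmapHp, hmaptP] at h
    exact h
  have h2' : ∀ i, sub (MvPowerSeries.X i +
      (MvPowerSeries.C (σ := Fin n) (R := Polynomial ℂ) Polynomial.X +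
       MvPowerSeries.C (σ := Fin n) (R := Polynomial ℂ) (Polynomial.C s)) * tshift s (Nt i))
      (fun j => MvPowerSeries.X j -
        (MvPowerSeries.C (σ := Fin n) (R := Polynomial ℂ) Polynomial.X +
         MvPowerSeries.C (σ := Fin n) (R := Polynomial ℂ) (Polynomial.C s)) *
          inclZP (H j)) = MvPowerSeries.X i := by
    intro i
    have h := congrArg (MvPowerSeries.map (σ := Fin n) ψ) (hinv.2 i)
    rw [map_sub_comm ψ _ hF] at h
    simp only [map_sub, map_add, map_mul, MvPowerSeries.map_X, hmapHp, hmaptP] at h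
    exact h
  exact master Polynomial.X (Polynomial.C s) Polynomial.X_ne_zero
    (Polynomial.X_add_C_ne_zero s) (fun i => inclZP (H i)) Nt (fun i => tshift s (Nt i))
    hHp hNt hN' (fun i => hinv.1 i) (fun i => hinv.2 i) h1' h2'
end
end
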